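/- arXiv:2504.07525 — 3 statements merged into one kernel-verified Lean document; each statement's English description precedes it below -/
import Mathlib

section
/- If γ is a *-connected path in ℤ^d with d ≥ 2, and x ∈ 𝓛_n is such that the range of γ intersects both S(x, L_n − 1) and S(x, 2L_n), then there exists a proper embedding 𝓜 of T_n with root at x such that the range of γ intersects S(𝓜(m), L_0 − 1) for every leaf m ∈ T_(n). -/
/-! If a `*`-connected path crosses the annulus between `S(x, L_n - 1)` and
`S(x, 2 L_n)`, then some proper embedding of the binary tree `T_n` with root at
`x` has all its leaf-spheres `S(𝓜(m), L₀ - 1)` visited by the path. -/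

/-- `ℓ∞`-norm of a lattice point, as a natural number. -/
def nsup {d : ℕ} (x : Fin d → ℤ) : ℕ := Finset.univ.sup fun i => (x i).natAbs

/-- `L_i = L₀ · 6^i`. -/
def Lnum (L₀ i : ℕ) : ℕ := L₀ * 6 ^ i

/-- `𝓜` (as a map on all words over `{1,2}`, only the values on words of length
`≤ n` matter) is a proper embedding of the binary tree `T_n` into `ℤ^d`
with root at `x`: `𝓜(∅) = x`; `𝓜(m) ∈ 𝓛_{n-k} = L_{n-k}·ℤ^d` for `m` in
generation `k ≤ n`; and the children `m1 = m ++ [0]`, `m2 = m ++ [1]` of `m` in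
generation `k < n` satisfy `|𝓜(m1) - 𝓜(m)| = L_{n-k}`, `|𝓜(m2) - 𝓜(m)| = 2 L_{n-k}`
in the ℓ∞ norm. -/
def ProperEmbedding (d L₀ n : ℕ) (x : Fin d → ℤ) (𝓜 : List (Fin 2) → (Fin d → ℤ)) : Prop :=
  𝓜 [] = x ∧
  (∀ m : List (Fin 2), m.length ≤ n →
    ∀ i : Fin d, ((Lnum L₀ (n - m.length) : ℤ)) ∣ 𝓜 m i) ∧
  (∀ m : List (Fin 2), m.length < n →
    nsup (𝓜 (m ++ [0]) - 𝓜 m) = Lnum L₀ (n - m.length) ∧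
    nsup (𝓜 (m ++ [1]) - 𝓜 m) = 2 * Lnum L₀ (n - m.length))

namespace Stmt1Aux

lemma le_nsup {d : ℕ} (v : Fin d → ℤ) (i : Fin d) : (v i).natAbs ≤ nsup v :=
  Finset.le_sup (f := fun i => (v i).natAbs) (Finset.mem_univ i)

lemma nsup_le {d N : ℕ} {v : Fin d → ℤ} (h : ∀ i, (v i).natAbs ≤ N) : nsup v ≤ N :=
  Finset.sup_le fun i _ => h i

lemma nsup_tri {d : ℕ} (a b c : Fin d → ℤ) :
    nsup (a - c) ≤ nsup (a - b) + nsup (b - c) := by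
  apply nsup_le
  intro i
  have h1 := le_nsup (a - b) i
  have h2 := le_nsup (b - c) i
  simp only [Pi.sub_apply] at *
  omega

lemma nsup_sub_comm {d : ℕ} (a b : Fin d → ℤ) : nsup (a - b) = nsup (b - a) := by
  apply le_antisymm <;> apply nsup_le <;> intro i
  · have := le_nsup (b - a) i; simp only [Pi.sub_apply] at *; omega
  · have := le_nsup (a - b) i; simp only [Pi.sub_apply] at *; omega

lemma ivt_up (f : ℕ → ℕ) (v : ℕ) (a b : ℕ) (hab : a ≤ b)
    (hstep : ∀ i, a ≤ i → i < b → f (i + 1) ≤ f i + 1)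
    (hfa : f a ≤ v) (hfb : v ≤ f b) :
    ∃ i, a ≤ i ∧ i ≤ b ∧ f i = v := by
  obtain ⟨k, hk⟩ : ∃ k, b - a = k := ⟨_, rfl⟩
  induction k generalizing a with
  | zero =>
    refine ⟨a, le_rfl, hab, ?_⟩
    have : a = b := by omega
    subst this; omega
  | succ k ih =>
    rcases Nat.lt_or_ge (f a) v with h | h
    · have hab' : a + 1 ≤ b := by omega
      have h1 : f (a + 1) ≤ v := by
        have := hstep a le_rfl (by omega); omega
      obtain ⟨i, hi1, hi2, hi3⟩ := ih (a + 1) hab'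
        (fun i hi1 hi2 => hstep i (by omega) hi2) h1 (by omega)
      exact ⟨i, by omega, hi2, hi3⟩
    · exact ⟨a, le_rfl, hab, by omega⟩

lemma ivt_down (f : ℕ → ℕ) (v : ℕ) (a b : ℕ) (hab : a ≤ b)
    (hstep : ∀ i, a ≤ i → i < b → f i ≤ f (i + 1) + 1)
    (hfa : v ≤ f a) (hfb : f b ≤ v) :
    ∃ i, a ≤ i ∧ i ≤ b ∧ f i = v := by
  obtain ⟨k, hk⟩ : ∃ k, b - a = k := ⟨_, rfl⟩
  induction k generalizing a with
  | zero =>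
    refine ⟨a, le_rfl, hab, ?_⟩
    have : a = b := by omega
    subst this; omega
  | succ k ih =>
    rcases Nat.lt_or_ge v (f a) with h | h
    · have hab' : a + 1 ≤ b := by omega
      have h1 : v ≤ f (a + 1) := by
        have := hstep a le_rfl (by omega); omega
      obtain ⟨i, hi1, hi2, hi3⟩ := ih (a + 1) hab'
        (fun i hi1 hi2 => hstep i (by omega) hi2) h1 (by omega)
      exact ⟨i, by omega, hi2, hi3⟩
    · exact ⟨a, le_rfl, hab, by omega⟩

lemma hits (ℓ : ℕ) (f : ℕ → ℕ)
    (hstep : ∀ i < ℓ, f (i + 1) ≤ f i + 1 ∧ f i ≤ f (i + 1) + 1)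
    (a b v : ℕ) (ha : a ≤ ℓ) (hb : b ≤ ℓ) (hfa : f a ≤ v) (hfb : v ≤ f b) :
    ∃ i ≤ ℓ, f i = v := by
  rcases le_total a b with h | h
  · obtain ⟨i, h1, h2, h3⟩ := ivt_up f v a b h
      (fun i hi1 hi2 => (hstep i (by omega)).1) hfa hfb
    exact ⟨i, by omega, h3⟩
  · obtain ⟨i, h1, h2, h3⟩ := ivt_down f v b a h
      (fun i hi1 hi2 => (hstep i (by omega)).2) hfb hfa
    exact ⟨i, by omega, h3⟩


lemma path_step {d : ℕ} (ℓ : ℕ) (γ : ℕ → Fin d → ℤ)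
    (hstar : ∀ i < ℓ, nsup (γ (i + 1) - γ i) = 1) (y : Fin d → ℤ) :
    ∀ i < ℓ, nsup (γ (i + 1) - y) ≤ nsup (γ i - y) + 1 ∧
      nsup (γ i - y) ≤ nsup (γ (i + 1) - y) + 1 := by
  intro i hi
  have h1 := nsup_tri (γ (i + 1)) (γ i) y
  have h2 := nsup_tri (γ i) (γ (i + 1)) y
  have h3 := hstar i hi
  have h4 : nsup (γ i - γ (i + 1)) = 1 := by rw [nsup_sub_comm]; exact h3
  omega

lemma round_lemma (d L c : ℕ) (hL : 1 ≤ L) (hc : 1 ≤ c) (x z : Fin d → ℤ)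
    (hx : ∀ i, (L : ℤ) ∣ x i) (hz : nsup (z - x) = c * L) :
    ∃ y : Fin d → ℤ, (∀ i, (L : ℤ) ∣ y i) ∧ nsup (y - x) = c * L ∧
      nsup (z - y) ≤ L - 1 := by
  have hLpos : (0 : ℤ) < (L : ℤ) := by exact_mod_cast hL
  have hM : ((c * L : ℕ) : ℤ) = (c : ℤ) * (L : ℤ) := by push_cast; ring
  refine ⟨fun i => x i + L * ((z i - x i) / (L : ℤ)), ?_, ?_, ?_⟩
  · intro i
    exact dvd_add (hx i) (Dvd.intro _ rfl)
  · apply le_antisymm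
    · apply nsup_le
      intro i
      have hb := le_nsup (z - x) i
      rw [hz] at hb
      simp only [Pi.sub_apply] at hb ⊢
      have hb1 : z i - x i ≤ ((c * L : ℕ) : ℤ) := by omega
      have hb2 : -((c * L : ℕ) : ℤ) ≤ z i - x i := by omega
      have h1 : (z i - x i) / (L : ℤ) ≤ (c : ℤ) := by
        calc (z i - x i) / (L : ℤ) ≤ ((c : ℤ) * L) / (L : ℤ) :=
              Int.ediv_le_ediv hLpos (by linarith [hM, hb1])
          _ = (c : ℤ) := Int.mul_ediv_cancel _ (by omega)
      have h2 : -(c : ℤ) ≤ (z i - x i) / (L : ℤ) := by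
        calc -(c : ℤ) = (-(c : ℤ) * L) / (L : ℤ) :=
              (Int.mul_ediv_cancel _ (by omega)).symm
          _ ≤ (z i - x i) / (L : ℤ) := Int.ediv_le_ediv hLpos (by linarith [hM, hb2])
      have h3 : (L : ℤ) * ((z i - x i) / (L : ℤ)) ≤ (L : ℤ) * (c : ℤ) :=
        mul_le_mul_of_nonneg_left h1 hLpos.le
      have h4 : (L : ℤ) * (-(c : ℤ)) ≤ (L : ℤ) * ((z i - x i) / (L : ℤ)) :=
        mul_le_mul_of_nonneg_left h2 hLpos.le
      have e : x i + (L : ℤ) * ((z i - x i) / (L : ℤ)) - x i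
          = (L : ℤ) * ((z i - x i) / (L : ℤ)) := by ring
      rw [e]
      have h5 : (L : ℤ) * (c : ℤ) = ((c * L : ℕ) : ℤ) := by rw [hM]; ring
      have h6 : (L : ℤ) * (-(c : ℤ)) = -((c * L : ℕ) : ℤ) := by rw [hM]; ring
      omega
    · have hne : (Finset.univ : Finset (Fin d)).Nonempty := by
        by_contra h
        rw [Finset.not_nonempty_iff_eq_empty] at h
        unfold nsup at hz
        rw [h] at hz
        simp at hz
        have : 1 ≤ c * L := Nat.one_le_iff_ne_zero.mpr (by positivity)
        omega
      obtain ⟨i, -, hi⟩ := Finset.exists_mem_eq_sup Finset.univ hne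
        (fun i => ((z - x) i).natAbs)
      have hi' : ((z - x) i).natAbs = c * L := by
        unfold nsup at hz; rw [← hi]; exact hz
      simp only [Pi.sub_apply] at hi'
      have hw : (L : ℤ) ∣ (z i - x i) := by
        rcases Int.natAbs_eq_iff.mp hi' with h | h <;> rw [h]
        · rw [hM]; exact Dvd.dvd.mul_left dvd_rfl _
        · rw [hM]; exact (Dvd.dvd.mul_left dvd_rfl _).neg_right
      have e : (fun j => x j + (L : ℤ) * ((z j - x j) / (L : ℤ))) i - x i
          = z i - x i := by
        simp only
        rw [Int.mul_ediv_cancel' hw]; ring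
      calc c * L = ((z - x) i).natAbs := hi'.symm
        _ = (((fun j => x j + (L : ℤ) * ((z j - x j) / (L : ℤ))) - x) i).natAbs := by
            simp only [Pi.sub_apply]; rw [e]
        _ ≤ nsup ((fun j => x j + (L : ℤ) * ((z j - x j) / (L : ℤ))) - x) := le_nsup _ i
  · apply nsup_le
    intro i
    simp only [Pi.sub_apply]
    have e : z i - (x i + (L : ℤ) * ((z i - x i) / (L : ℤ))) = (z i - x i) % (L : ℤ) := by
      rw [Int.emod_def]; ring
    rw [e]
    have h1 := Int.emod_nonneg (z i - x i) (by omega : (L : ℤ) ≠ 0)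
    have h2 := Int.emod_lt_of_pos (z i - x i) hLpos
    omega


lemma Lnum_pos {L₀ : ℕ} (h : 1 ≤ L₀) (n : ℕ) : 1 ≤ Lnum L₀ n := by
  unfold Lnum; exact Nat.mul_pos h (pow_pos (by norm_num) n)

lemma Lnum_succ (L₀ n : ℕ) : Lnum L₀ (n + 1) = 6 * Lnum L₀ n := by
  unfold Lnum; ring

lemma key (d L₀ : ℕ) (hL₀ : 1 ≤ L₀) (ℓ : ℕ) (γ : ℕ → (Fin d → ℤ))
    (hstar : ∀ i < ℓ, nsup (γ (i + 1) - γ i) = 1) :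
    ∀ n (x : Fin d → ℤ), (∀ i : Fin d, ((Lnum L₀ n : ℤ)) ∣ x i) →
    (∃ i ≤ ℓ, nsup (γ i - x) = Lnum L₀ n - 1) →
    (∃ i ≤ ℓ, nsup (γ i - x) = 2 * Lnum L₀ n) →
    ∃ 𝓜 : List (Fin 2) → (Fin d → ℤ), ProperEmbedding d L₀ n x 𝓜 ∧
      ∀ m : List (Fin 2), m.length = n → ∃ i ≤ ℓ, nsup (γ i - 𝓜 m) = L₀ - 1 := by
  intro n
  induction n with
  | zero =>
    intro x hx hin hout
    refine ⟨fun _ => x, ⟨rfl, ?_, ?_⟩, ?_⟩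
    · intro m hm i
      simpa using hx i
    · intro m hm
      exact absurd hm (Nat.not_lt_zero _)
    · intro m hm
      simpa [Lnum] using hin
  | succ n ih =>
    intro x hx hin hout
    set L := Lnum L₀ n with hLdef
    have hL : 1 ≤ L := Lnum_pos hL₀ n
    have hLs : Lnum L₀ (n + 1) = 6 * L := Lnum_succ L₀ n
    obtain ⟨i₀, hi₀ℓ, hi₀⟩ := hin
    obtain ⟨i₁, hi₁ℓ, hi₁⟩ := hout
    rw [hLs] at hi₀ hi₁
    have hxL : ∀ i, (L : ℤ) ∣ x i := by
      intro i
      refine dvd_trans ?_ (hx i)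
      exact_mod_cast Int.natCast_dvd_natCast.mpr (by rw [hLs]; exact dvd_mul_left L 6)
    -- find a time at distance exactly 6L from x
    obtain ⟨j₁, hj₁ℓ, hj₁⟩ := hits ℓ (fun i => nsup (γ i - x)) (path_step ℓ γ hstar x)
      i₀ i₁ (6 * L) hi₀ℓ hi₁ℓ (by show nsup (γ i₀ - x) ≤ 6 * L; omega)
      (by show 6 * L ≤ nsup (γ i₁ - x); omega)
    -- round to lattice points
    obtain ⟨y₁, hy₁dvd, hy₁x, hy₁near⟩ := round_lemma d L 6 hL (by norm_num) x (γ j₁)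
      hxL (by exact hj₁)
    obtain ⟨y₂, hy₂dvd, hy₂x, hy₂near⟩ := round_lemma d L 12 hL (by norm_num) x (γ i₁)
      hxL (by rw [hi₁]; ring)
    -- crossing hypotheses around y₁
    have ht1 := nsup_tri (γ i₁) y₁ x
    have hfy₁ : 6 * L ≤ nsup (γ i₁ - y₁) := by
      rw [hi₁] at ht1; rw [hy₁x] at ht1; omega
    obtain ⟨a₁, ha₁ℓ, ha₁⟩ := hits ℓ (fun i => nsup (γ i - y₁)) (path_step ℓ γ hstar y₁)
      j₁ i₁ (L - 1) hj₁ℓ hi₁ℓ (by show nsup (γ j₁ - y₁) ≤ L - 1; exact hy₁near)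
      (by show L - 1 ≤ nsup (γ i₁ - y₁); omega)
    obtain ⟨b₁, hb₁ℓ, hb₁⟩ := hits ℓ (fun i => nsup (γ i - y₁)) (path_step ℓ γ hstar y₁)
      j₁ i₁ (2 * L) hj₁ℓ hi₁ℓ (by show nsup (γ j₁ - y₁) ≤ 2 * L; omega)
      (by show 2 * L ≤ nsup (γ i₁ - y₁); omega)
    -- crossing hypotheses around y₂
    have ht2 := nsup_tri y₂ (γ i₀) x
    have hfy₂ : 6 * L + 1 ≤ nsup (γ i₀ - y₂) := by
      rw [hy₂x, hi₀, nsup_sub_comm y₂ (γ i₀)] at ht2; omega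
    obtain ⟨a₂, ha₂ℓ, ha₂⟩ := hits ℓ (fun i => nsup (γ i - y₂)) (path_step ℓ γ hstar y₂)
      i₁ i₀ (L - 1) hi₁ℓ hi₀ℓ (by show nsup (γ i₁ - y₂) ≤ L - 1; exact hy₂near)
      (by show L - 1 ≤ nsup (γ i₀ - y₂); omega)
    obtain ⟨b₂, hb₂ℓ, hb₂⟩ := hits ℓ (fun i => nsup (γ i - y₂)) (path_step ℓ γ hstar y₂)
      i₁ i₀ (2 * L) hi₁ℓ hi₀ℓ (by show nsup (γ i₁ - y₂) ≤ 2 * L; omega)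
      (by show 2 * L ≤ nsup (γ i₀ - y₂); omega)
    obtain ⟨𝓜₁, hPE₁, hleaf₁⟩ := ih y₁ hy₁dvd ⟨a₁, ha₁ℓ, ha₁⟩ ⟨b₁, hb₁ℓ, hb₁⟩
    obtain ⟨𝓜₂, hPE₂, hleaf₂⟩ := ih y₂ hy₂dvd ⟨a₂, ha₂ℓ, ha₂⟩ ⟨b₂, hb₂ℓ, hb₂⟩
    refine ⟨fun m => match m with
      | [] => x
      | b :: rest => if b = 0 then 𝓜₁ rest else 𝓜₂ rest, ⟨rfl, ?_, ?_⟩, ?_⟩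
    · intro m hm i
      match m with
      | [] => simpa using hx i
      | b :: rest =>
        simp only [List.length_cons, Nat.succ_sub_succ] at *
        by_cases hb : b = 0
        · simp only [hb, if_pos rfl]
          exact hPE₁.2.1 rest (by omega) i
        · simp only [if_neg hb]
          exact hPE₂.2.1 rest (by omega) i
    · intro m hm
      match m with
      | [] =>
        constructor
        · show nsup (𝓜₁ [] - x) = Lnum L₀ (n + 1 - 0)
          rw [hPE₁.1, Nat.sub_zero, hLs, hy₁x]
        · show nsup (𝓜₂ [] - x) = 2 * Lnum L₀ (n + 1 - 0)
          rw [hPE₂.1, Nat.sub_zero, hLs, hy₂x]; ring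
      | b :: rest =>
        simp only [List.length_cons, Nat.succ_sub_succ, List.cons_append] at *
        by_cases hb : b = 0
        · simp only [hb, if_pos rfl]
          exact hPE₁.2.2 rest (by omega)
        · simp only [if_neg hb]
          exact hPE₂.2.2 rest (by omega)
    · intro m hm
      match m with
      | b :: rest =>
        simp only [List.length_cons] at hm
        by_cases hb : b = 0
        · simp only [hb, if_pos rfl]
          exact hleaf₁ rest (by omega)
        · simp only [if_neg hb]
          exact hleaf₂ rest (by omega)

end Stmt1Aux

/-- Let `d ≥ 2`, `L₀ ≥ 1`, `n ≥ 1`. If `γ : {0,…,ℓ} → ℤ^d` is a `*`-connected path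
(consecutive points at ℓ∞-distance 1), `x ∈ 𝓛_n`, and the range of `γ` meets both
`S(x, L_n - 1)` and `S(x, 2 L_n)` (ℓ∞-spheres), then there is a proper embedding
`𝓜` of `T_n` with root at `x` whose leaf-spheres `S(𝓜(m), L₀ - 1)`, `m` a word of
length `n`, are all visited by `γ`. -/
theorem stmt1 (d : ℕ) (hd : 2 ≤ d) (L₀ : ℕ) (hL₀ : 1 ≤ L₀) (n : ℕ) (hn : 1 ≤ n)
    (x : Fin d → ℤ) (hx : ∀ i : Fin d, ((Lnum L₀ n : ℤ)) ∣ x i)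
    (ℓ : ℕ) (γ : ℕ → (Fin d → ℤ))
    (hstar : ∀ i < ℓ, nsup (γ (i + 1) - γ i) = 1)
    (hin : ∃ i ≤ ℓ, nsup (γ i - x) = Lnum L₀ n - 1)
    (hout : ∃ i ≤ ℓ, nsup (γ i - x) = 2 * Lnum L₀ n) :
    ∃ 𝓜 : List (Fin 2) → (Fin d → ℤ), ProperEmbedding d L₀ n x 𝓜 ∧
      ∀ m : List (Fin 2), m.length = n → ∃ i ≤ ℓ, nsup (γ i - 𝓜 m) = L₀ - 1 :=
  Stmt1Aux.key d L₀ hL₀ ℓ γ hstar n x hx hin hout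
end

section
/- For d ≥ 5 and μ critical with mean 1 and finite positive variance, there exists u_1 < ∞ such that for every u > u_1 there is q ∈ (0,1) with P(A_n^u) ≤ q^{2^n} for all n ≥ 1, where A_n^u is the event that a nearest-neighbor path in the vacant set 𝓥^u connects S(0, L_n − 1) to S(0, 2L_n), with L_n = 6^n. In particular the critical parameter u_* of vacant set percolation is finite. -/
open MeasureTheory ENNReal

/-! Finiteness of the critical parameter for vacant set percolation of
branching interlacements. -/

/-- Euclidean norm of a lattice point. -/
noncomputable def enorm {d : ℕ} (x : Fin d → ℤ) : ℝ :=
  Real.sqrt (∑ i, ((x i : ℝ)) ^ 2)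

/-- `ℓ¹`-distance. -/
def l1dist {d : ℕ} (x y : Fin d → ℤ) : ℕ := ∑ i, (x i - y i).natAbs

/-- Branching interlacements: random sets `I u` with
`P(I u ∩ K = ∅) = exp(-u·BCap(K))`. -/
structure BIModel (d : ℕ) where
  Ω : Type
  mΩ : MeasurableSpace Ω
  P : Measure Ω
  prob : IsProbabilityMeasure P
  I : ℝ → Ω → Set (Fin d → ℤ)
  BCap : Finset (Fin d → ℤ) → ℝ
  law : ∀ u : ℝ, 0 ≤ u → ∀ K : Finset (Fin d → ℤ),
    P {ω | Disjoint (I u ω) (K : Set (Fin d → ℤ))} =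
      ENNReal.ofReal (Real.exp (-(u * BCap K)))
  mono : ∀ u v : ℝ, u ≤ v → ∀ ω, I u ω ⊆ I v ω

attribute [instance] BIModel.mΩ

/-- The event that a nearest-neighbor path in `𝓥^u = ℤ^d \ I u` connects the
ℓ∞-sphere `S(0, 6^n - 1)` to `S(0, 2·6^n)`. -/
def crossEvent {d : ℕ} (M : BIModel d) (u : ℝ) (n : ℕ) : Set M.Ω :=
  {ω | ∃ (ℓ : ℕ) (γ : ℕ → (Fin d → ℤ)),
    (∀ i < ℓ, l1dist (γ (i + 1)) (γ i) = 1) ∧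
    (∀ i ≤ ℓ, γ i ∉ M.I u ω) ∧
    nsup (γ 0) = 6 ^ n - 1 ∧ nsup (γ ℓ) = 2 * 6 ^ n}

/-- The vacant set at level `u` has an infinite connected component
(an infinite self-avoiding nearest-neighbor path avoiding `I u`). -/
def Percolates {d : ℕ} (M : BIModel d) (u : ℝ) (ω : M.Ω) : Prop :=
  ∃ f : ℕ → (Fin d → ℤ), Function.Injective f ∧
    (∀ n : ℕ, l1dist (f (n + 1)) (f n) = 1) ∧ ∀ n : ℕ, f n ∉ M.I u ω

namespace BIaux

variable {d : ℕ}

lemma nsup_coord_le (x : Fin d → ℤ) (j : Fin d) : (x j).natAbs ≤ nsup x :=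
  Finset.le_sup (f := fun i => (x i).natAbs) (Finset.mem_univ j)

lemma nsup_le_of (x : Fin d → ℤ) (R : ℕ) (h : ∀ j, (x j).natAbs ≤ R) : nsup x ≤ R :=
  Finset.sup_le fun j _ => h j

lemma nsup_sub_coord_le (x y : Fin d → ℤ) (j : Fin d) : (x j - y j).natAbs ≤ nsup (x - y) := by
  have := nsup_coord_le (x - y) j
  simpa using this

lemma nsup_sub_le_of (x y : Fin d → ℤ) (R : ℕ) (h : ∀ j, (x j - y j).natAbs ≤ R) :
    nsup (x - y) ≤ R := by
  apply nsup_le_of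
  intro j
  simpa using h j

lemma nsup_tri (x y w : Fin d → ℤ) : nsup (x - w) ≤ nsup (x - y) + nsup (y - w) := by
  apply nsup_sub_le_of
  intro j
  have h1 := nsup_sub_coord_le x y j
  have h2 := nsup_sub_coord_le y w j
  have h3 : x j - w j = (x j - y j) + (y j - w j) := by ring
  have h4 := Int.natAbs_add_le (x j - y j) (y j - w j)
  rw [h3]
  omega

lemma nsup_sub_comm (x y : Fin d → ℤ) : nsup (x - y) = nsup (y - x) := by
  unfold nsup
  apply Finset.sup_congr rfl
  intro j _
  simp only [Pi.sub_apply]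
  omega

lemma nsup_sub_le_l1dist (x y : Fin d → ℤ) : nsup (x - y) ≤ l1dist x y := by
  apply nsup_sub_le_of
  intro j
  exact Finset.single_le_sum (f := fun i => (x i - y i).natAbs)
    (fun i _ => Nat.zero_le _) (Finset.mem_univ j)

lemma l1dist_comm (x y : Fin d → ℤ) : l1dist x y = l1dist y x := by
  unfold l1dist
  apply Finset.sum_congr rfl
  intro j _
  omega

lemma step_bound {x y w : Fin d → ℤ} (h : l1dist x y = 1) :
    nsup (x - w) ≤ nsup (y - w) + 1 := by
  have := nsup_tri x y w
  have := nsup_sub_le_l1dist x y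
  omega

lemma ivt_aux (f : ℕ → ℕ) (hstep : ∀ i, f (i + 1) ≤ f i + 1) (a k c : ℕ)
    (h1 : f a ≤ c) (h2 : c ≤ f (a + k)) : ∃ i, a ≤ i ∧ i ≤ a + k ∧ f i = c := by
  induction k with
  | zero =>
    rw [Nat.add_zero] at h2
    exact ⟨a, le_refl _, le_refl _, by omega⟩
  | succ k ih =>
    have h2' : c ≤ f (a + k + 1) := h2
    by_cases h : c ≤ f (a + k)
    · obtain ⟨i, hi1, hi2, hi3⟩ := ih h
      exact ⟨i, hi1, by omega, hi3⟩
    · have := hstep (a + k)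
      exact ⟨a + k + 1, by omega, by omega, by omega⟩


lemma ivt_aux' (f : ℕ → ℕ) (hstep : ∀ i, f i ≤ f (i + 1) + 1) (a b c : ℕ) (hba : b ≤ a)
    (h1 : f a ≤ c) (h2 : c ≤ f b) : ∃ i, b ≤ i ∧ i ≤ a ∧ f i = c := by
  have key := ivt_aux (fun i => f (a - i)) ?_ 0 (a - b) c (by simpa using h1) ?_
  · obtain ⟨i, _, hi2, hi3⟩ := key
    exact ⟨a - i, by omega, by omega, hi3⟩
  · intro i
    show f (a - (i + 1)) ≤ f (a - i) + 1
    by_cases h : i < a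
    · have e : a - i = (a - (i + 1)) + 1 := by omega
      rw [e]
      exact hstep _
    · have e : a - (i + 1) = a - i := by omega
      rw [e]
      omega
  · have e : 0 + (a - b) = a - b := by omega
    have e2 : a - (a - b) = b := by omega
    rw [e]
    simpa [e2] using h2

/-- interval value theorem along a path, indices confined to `[0,ℓ]`. -/
lemma path_ivt (γ : ℕ → (Fin d → ℤ)) (w : Fin d → ℤ) (ℓ : ℕ)
    (hγ : ∀ i < ℓ, l1dist (γ (i + 1)) (γ i) = 1)
    (a b c : ℕ) (ha : a ≤ ℓ) (hb : b ≤ ℓ)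
    (h1 : nsup (γ a - w) ≤ c) (h2 : c ≤ nsup (γ b - w)) :
    ∃ i ≤ ℓ, nsup (γ i - w) = c := by
  set F : ℕ → ℕ := fun i => nsup (γ (min i ℓ) - w) with hF
  have hstep1 : ∀ i, F (i + 1) ≤ F i + 1 := by
    intro i
    by_cases h : i < ℓ
    · have e1 : min (i + 1) ℓ = i + 1 := by omega
      have e2 : min i ℓ = i := by omega
      simp only [hF, e1, e2]
      exact step_bound (hγ i h)
    · have e : min (i + 1) ℓ = min i ℓ := by omega
      simp only [hF, e]
      omega
  have hstep2 : ∀ i, F i ≤ F (i + 1) + 1 := by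
    intro i
    by_cases h : i < ℓ
    · have e1 : min (i + 1) ℓ = i + 1 := by omega
      have e2 : min i ℓ = i := by omega
      simp only [hF, e1, e2]
      have h' := hγ i h
      rw [l1dist_comm] at h'
      exact step_bound h' 
    · have e : min (i + 1) ℓ = min i ℓ := by omega
      simp only [hF, e]
      omega
  have hFa : F a = nsup (γ a - w) := by simp only [hF, min_eq_left ha]
  have hFb : F b = nsup (γ b - w) := by simp only [hF, min_eq_left hb]
  rcases le_total a b with hab | hba
  · obtain ⟨i, _, _, hi⟩ := ivt_aux F hstep1 a (b - a) c (by omega)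
      (by rw [show a + (b - a) = b by omega, hFb]; exact h2)
    refine ⟨min i ℓ, min_le_right _ _, hi⟩
  · obtain ⟨i, _, _, hi⟩ := ivt_aux' F hstep2 a b c (hba) (by omega) (by rw [hFb]; exact h2)
    refine ⟨min i ℓ, min_le_right _ _, hi⟩

/-- Lattice grid of spacing `m` around `w`, indices in `[-12,12]^d`. -/
def grid (m : ℤ) (w : Fin d → ℤ) : Finset (Fin d → ℤ) :=
  Finset.image (fun t : Fin d → Fin 25 => fun j => w j + m * ((t j : ℤ) - 12)) Finset.univ

/-- Grid points on the `ℓ∞` sphere of radius `R` around `w`. -/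
def netS (m : ℤ) (R : ℕ) (w : Fin d → ℤ) : Finset (Fin d → ℤ) :=
  (grid m w).filter fun x => nsup (x - w) = R

lemma card_grid_le (m : ℤ) (w : Fin d → ℤ) : (grid m w).card ≤ 25 ^ d := by
  refine (Finset.card_image_le).trans ?_
  rw [Finset.card_univ]
  simp [Fintype.card_fun]

lemma card_netS_le (m : ℤ) (R : ℕ) (w : Fin d → ℤ) : (netS m R w).card ≤ 25 ^ d :=
  (Finset.card_filter_le _ _).trans (card_grid_le m w)

lemma netS_sphere {m : ℤ} {R : ℕ} {w x : Fin d → ℤ} (h : x ∈ netS m R w) :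
    nsup (x - w) = R := (Finset.mem_filter.mp h).2

lemma round_lemma (hd : 0 < d) (n r : ℕ) (hr : r ≤ 12) (w p : Fin d → ℤ)
    (hp : nsup (p - w) = r * 6 ^ n) :
    ∃ w1 ∈ netS ((6 : ℤ) ^ n) (r * 6 ^ n) w, ∀ j, (p j - w1 j).natAbs < 6 ^ n := by
  have : Nonempty (Fin d) := ⟨⟨0, hd⟩⟩
  set m : ℤ := (6 : ℤ) ^ n with hm
  have hm0 : 0 < m := by positivity
  have hmc : ((6 ^ n : ℕ) : ℤ) = m := by push_cast; ring
  obtain ⟨i₀, -, hi₀⟩ := Finset.exists_mem_eq_sup (Finset.univ : Finset (Fin d))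
    Finset.univ_nonempty (fun j => ((p - w) j).natAbs)
  have hi₀' : (p i₀ - w i₀).natAbs = r * 6 ^ n := by
    have h2 : nsup (p - w) = ((p - w) i₀).natAbs := hi₀
    rw [hp] at h2
    simpa using h2.symm
  have hcoord : ∀ j, (p j - w j).natAbs ≤ r * 6 ^ n := fun j => by
    have := nsup_sub_coord_le p w j; omega
  set v : Fin d → ℤ := fun j => if j = i₀ then p j - w j else m * ((p j - w j) / m) with hv
  have hQ : ((r * 6 ^ n : ℕ) : ℤ) = (r : ℤ) * m := by rw [hm]; push_cast; ring
  have hve : ∀ j, ∃ e : ℤ, v j = m * e ∧ -(r : ℤ) ≤ e ∧ e ≤ (r : ℤ) := by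
    intro j
    by_cases h : j = i₀
    · subst h
      rcases Int.natAbs_eq (p j - w j) with he | he
      · refine ⟨r, ?_, by omega, le_refl _⟩
        simp only [hv, if_pos rfl]
        rw [he, hi₀', hQ]; ring
      · refine ⟨-r, ?_, le_refl _, by omega⟩
        simp only [hv, if_pos rfl]
        rw [he, hi₀', hQ]; ring
    · have hb : -((r : ℤ) * m) ≤ p j - w j ∧ p j - w j ≤ (r : ℤ) * m := by
        have h1 := hcoord j
        have h2 := hQ
        omega
      refine ⟨(p j - w j) / m, by simp [hv, h], ?_, ?_⟩
      · have h3 := Int.ediv_le_ediv hm0 hb.1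
        rwa [show -((r : ℤ) * m) = (-(r : ℤ)) * m by ring,
          Int.mul_ediv_cancel _ (ne_of_gt hm0)] at h3
      · have h3 := Int.ediv_le_ediv hm0 hb.2
        rwa [Int.mul_ediv_cancel _ (ne_of_gt hm0)] at h3
  refine ⟨w + v, ?_, ?_⟩
  · rw [netS, Finset.mem_filter]
    have hsub : ∀ j, ((w + v - w) j) = v j := by intro j; simp
    refine ⟨?_, ?_⟩
    · rw [grid, Finset.mem_image]
      choose e he h1 h2 using hve
      refine ⟨fun j => ⟨(e j + 12).toNat, by have := hr; have := h1 j; have := h2 j; omega⟩,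
        Finset.mem_univ _, ?_⟩
      funext j
      have hc : (((e j + 12).toNat : ℤ)) = e j + 12 := by
        have := h1 j; omega
      simp only [Pi.add_apply, hc]
      rw [he j]
      ring
    · apply le_antisymm
      · apply nsup_le_of
        intro j
        rw [hsub j]
        obtain ⟨e, he, h1, h2⟩ := hve j
        have hle1 : -((r : ℤ) * m) ≤ v j := by rw [he]; nlinarith
        have hle2 : v j ≤ (r : ℤ) * m := by rw [he]; nlinarith
        have := hQ
        omega
      · have h5 : ((w + v - w) i₀).natAbs = r * 6 ^ n := by
          rw [hsub i₀, hv]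
          simp only [if_pos rfl]
          exact hi₀'
        rw [← h5]
        exact nsup_coord_le _ i₀
  · intro j
    by_cases h : j = i₀
    · subst h
      have h6 : p j - (w + v) j = 0 := by simp [hv]
      rw [h6]
      simp
    · have hmod1 : 0 ≤ (p j - w j) % m := Int.emod_nonneg _ (ne_of_gt hm0)
      have hmod2 : (p j - w j) % m < m := Int.emod_lt_of_pos _ hm0
      have hdef : (p j - w j) % m = p j - w j - m * ((p j - w j) / m) := by
        rw [Int.emod_def]
      have h7 : p j - (w + v) j = (p j - w j) % m := by
        simp only [Pi.add_apply, hv, if_neg h]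
        omega
      rw [h7]
      omega

/-- Leaf sets of proper embeddings of the binary tree of depth `n` rooted at `w`. -/
def emb : ℕ → (Fin d → ℤ) → Finset (Finset (Fin d → ℤ))
  | 0, w => {{w}}
  | n + 1, w =>
    (netS ((6 : ℤ) ^ n) (6 * 6 ^ n) w).biUnion fun w1 =>
      (netS ((6 : ℤ) ^ n) (12 * 6 ^ n) w).biUnion fun w2 =>
        (emb n w1).biUnion fun K1 =>
          (emb n w2).image fun K2 => K1 ∪ K2

lemma emb_card : ∀ n, ∀ w : Fin d → ℤ, (emb n w).card ≤ (25 ^ d) ^ (2 ^ (n + 1) - 2) := by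
  intro n
  induction n with
  | zero => intro w; simp [emb]
  | succ n ih =>
    intro w
    set E : ℕ := (25 ^ d) ^ (2 ^ (n + 1) - 2) with hE
    have hNE : 1 ≤ 25 ^ d := Nat.one_le_pow _ _ (by norm_num)
    have step1 : (emb (n + 1) w).card ≤ 25 ^ d * (25 ^ d * (E * E)) := by
      rw [emb]
      refine (Finset.card_biUnion_le).trans ?_
      refine (Finset.sum_le_card_nsmul _ _ (25 ^ d * (E * E)) ?_).trans ?_
      · intro w1 _
        refine (Finset.card_biUnion_le).trans ?_
        refine (Finset.sum_le_card_nsmul _ _ (E * E) ?_).trans ?_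
        · intro w2 _
          refine (Finset.card_biUnion_le).trans ?_
          refine (Finset.sum_le_card_nsmul _ _ E ?_).trans ?_
          · intro K1 _
            exact (Finset.card_image_le).trans (ih _)
          · have := ih w1
            calc (emb n w1).card • E ≤ E • E := Nat.mul_le_mul_right E (ih w1)
            _ = E * E := smul_eq_mul _ _
        · calc (netS ((6:ℤ)^n) (12 * 6^n) w).card • (E * E)
              ≤ (25 ^ d) • (E * E) := Nat.mul_le_mul_right _ (card_netS_le _ _ _)
          _ = 25 ^ d * (E * E) := smul_eq_mul _ _
      · calc (netS ((6:ℤ)^n) (6 * 6^n) w).card • (25 ^ d * (E * E))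
            ≤ (25 ^ d) • (25 ^ d * (E * E)) := Nat.mul_le_mul_right _ (card_netS_le _ _ _)
        _ = 25 ^ d * (25 ^ d * (E * E)) := smul_eq_mul _ _
    refine step1.trans ?_
    rw [hE]
    have h2 : 2 ≤ 2 ^ (n + 1) := by
      have := Nat.one_le_two_pow (n := n)
      calc 2 = 2 * 1 := by norm_num
      _ ≤ 2 * 2 ^ n := by omega
      _ = 2 ^ (n + 1) := by rw [pow_succ]; ring
    have harith : 2 + ((2 ^ (n + 1) - 2) + (2 ^ (n + 1) - 2)) = 2 ^ (n + 1 + 1) - 2 := by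
      have : 2 ^ (n + 1 + 1) = 2 * 2 ^ (n + 1) := by rw [pow_succ]; ring
      omega
    calc 25 ^ d * (25 ^ d * ((25 ^ d) ^ (2 ^ (n+1) - 2) * (25 ^ d) ^ (2 ^ (n+1) - 2)))
        = (25 ^ d) ^ (2 + ((2 ^ (n+1) - 2) + (2 ^ (n+1) - 2))) := by
          rw [pow_add, pow_add, pow_two]; ring
      _ = (25 ^ d) ^ (2 ^ (n + 1 + 1) - 2) := by rw [harith]
      _ ≤ (25 ^ d) ^ (2 ^ (n + 1 + 1) - 2) := le_refl _

/-- Maximal deviation of leaves from the root. -/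
def devN : ℕ → ℕ
  | 0 => 0
  | n + 1 => 12 * 6 ^ n + devN n

lemma devN5 : ∀ n, 5 * devN n + 12 = 12 * 6 ^ n := by
  intro n
  induction n with
  | zero => simp [devN]
  | succ n ih =>
    have h6 : (6:ℕ) ^ (n + 1) = 6 * 6 ^ n := by rw [pow_succ]; ring
    simp only [devN, h6]
    omega

lemma le_enorm_coord (x : Fin d → ℤ) (j : Fin d) : ((x j).natAbs : ℝ) ≤ _root_.enorm x := by
  unfold _root_.enorm
  have h1 : ((x j).natAbs : ℝ) = |((x j : ℝ))| := by
    rw [Nat.cast_natAbs]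
    exact Int.cast_abs
  rw [h1, ← Real.sqrt_sq_eq_abs]
  apply Real.sqrt_le_sqrt
  exact Finset.single_le_sum (f := fun i => ((x i : ℝ)) ^ 2)
    (fun i _ => sq_nonneg _) (Finset.mem_univ j)

lemma geo_le (n : ℕ) : ∑ j ∈ Finset.range n, (1 / 3 : ℝ) ^ j ≤ 3 / 2 := by
  have h0 : (0 : ℝ) ≤ (1 / 3 : ℝ) ^ n := by positivity
  have hne : (1 / 3 : ℝ) ≠ 1 := by norm_num
  rw [geom_sum_eq hne]
  rw [div_le_iff_of_neg (by norm_num : (1 / 3 - 1 : ℝ) < 0)]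
  nlinarith

/-- Invariants of leaf sets: deviation, cardinality, and Green-sum bound. -/
lemma emb_inv (hd : 5 ≤ d) (G : (Fin d → ℤ) → ℝ) (c₂ : ℝ) (hc₂ : 0 < c₂)
    (hG2 : ∀ z : Fin d → ℤ, z ≠ 0 → G z ≤ c₂ * _root_.enorm z ^ (4 - (d : ℝ))) :
    ∀ n, ∀ w : Fin d → ℤ, ∀ K ∈ emb n w,
      (∀ x ∈ K, ∀ j, (x j - w j).natAbs ≤ devN n) ∧
      K.card = 2 ^ n ∧
      (∀ x ∈ K, ∑ y ∈ K, G (y - x) ≤ G 0 + c₂ * ∑ j ∈ Finset.range n, (1 / 3 : ℝ) ^ j) := by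
  intro n
  induction n with
  | zero =>
    intro w K hK
    have hKw : K = {w} := by simpa [emb] using hK
    subst hKw
    refine ⟨?_, by simp, ?_⟩
    · intro x hx j
      rw [Finset.mem_singleton] at hx
      subst hx
      simp [devN]
    · intro x hx
      rw [Finset.mem_singleton] at hx
      subst hx
      simp
  | succ n ih =>
    intro w K hK
    simp only [emb, Finset.mem_biUnion, Finset.mem_image] at hK
    obtain ⟨w1, hw1, w2, hw2, K1, hK1, K2, hK2, rfl⟩ := hK
    obtain ⟨hdev1, hcard1, hsum1⟩ := ih w1 K1 hK1
    obtain ⟨hdev2, hcard2, hsum2⟩ := ih w2 K2 hK2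
    have hs1 : nsup (w1 - w) = 6 * 6 ^ n := netS_sphere hw1
    have hs2 : nsup (w2 - w) = 12 * 6 ^ n := netS_sphere hw2
    -- coordinate where w2 is extremal
    have hne : Nonempty (Fin d) := ⟨⟨0, by omega⟩⟩
    obtain ⟨j₀, -, hj₀⟩ := Finset.exists_mem_eq_sup (Finset.univ : Finset (Fin d))
      Finset.univ_nonempty (fun j => ((w2 - w) j).natAbs)
    have hj₀' : (w2 j₀ - w j₀).natAbs = 12 * 6 ^ n := by
      have h2 : nsup (w2 - w) = ((w2 - w) j₀).natAbs := hj₀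
      rw [hs2] at h2
      simpa using h2.symm
    have hw1c : ∀ j, (w1 j - w j).natAbs ≤ 6 * 6 ^ n := fun j => by
      have := nsup_sub_coord_le w1 w j; omega
    have hw2c : ∀ j, (w2 j - w j).natAbs ≤ 12 * 6 ^ n := fun j => by
      have := nsup_sub_coord_le w2 w j; omega
    have hd5 := devN5 n
    -- separation between the two leaf clouds
    have hsep : ∀ x ∈ K1, ∀ y ∈ K2, 6 ^ n + 1 ≤ (x j₀ - y j₀).natAbs := by
      intro x hx y hy
      have h1 := hdev1 x hx j₀
      have h2 := hdev2 y hy j₀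
      have h3 := hw1c j₀
      omega
    have hdisj : Disjoint K1 K2 := by
      rw [Finset.disjoint_left]
      intro x hx hx2
      have := hsep x hx x hx2
      omega
    have hcard : (K1 ∪ K2).card = 2 ^ (n + 1) := by
      rw [Finset.card_union_of_disjoint hdisj, hcard1, hcard2, pow_succ]
      ring
    -- bound on G across the separation
    have hGpair : ∀ z : Fin d → ℤ, 6 ^ n + 1 ≤ (z j₀).natAbs →
        G z ≤ c₂ * ((6 : ℝ) ^ n)⁻¹ := by
      intro z hz
      have hz0 : z ≠ 0 := by
        intro h0
        rw [h0] at hz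
        simp at hz
      have h6pos : (0 : ℝ) < (6 : ℝ) ^ n := by positivity
      have h61 : (1 : ℝ) ≤ (6 : ℝ) ^ n := by
        calc (1:ℝ) = 1 ^ n := (one_pow n).symm
        _ ≤ 6 ^ n := pow_le_pow_left₀ (by norm_num) (by norm_num) n
      have hen : (6 : ℝ) ^ n ≤ _root_.enorm z := by
        have h1 := le_enorm_coord z j₀
        have h2 : ((6 ^ n + 1 : ℕ) : ℝ) ≤ ((z j₀).natAbs : ℝ) := by exact_mod_cast hz
        have h3 : ((6 ^ n + 1 : ℕ) : ℝ) = (6:ℝ) ^ n + 1 := by push_cast; ring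
        linarith
      have he1 : (1 : ℝ) ≤ _root_.enorm z := le_trans h61 hen
      have hexp : (4 - (d : ℝ)) ≤ -1 := by
        have : (5 : ℝ) ≤ (d : ℝ) := by exact_mod_cast hd
        linarith
      calc G z ≤ c₂ * _root_.enorm z ^ (4 - (d : ℝ)) := hG2 z hz0
        _ ≤ c₂ * _root_.enorm z ^ (-1 : ℝ) := by
            apply mul_le_mul_of_nonneg_left _ hc₂.le
            exact Real.rpow_le_rpow_of_exponent_le he1 hexp
        _ = c₂ * (_root_.enorm z)⁻¹ := by rw [Real.rpow_neg_one]
        _ ≤ c₂ * ((6 : ℝ) ^ n)⁻¹ := by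
            apply mul_le_mul_of_nonneg_left _ hc₂.le
            exact inv_anti₀ h6pos hen
    have hcrossG : ∀ x ∈ K1, ∀ y ∈ K2, G (y - x) ≤ c₂ * ((6 : ℝ) ^ n)⁻¹ := by
      intro x hx y hy
      apply hGpair
      have := hsep x hx y hy
      simp only [Pi.sub_apply]
      omega
    have hcrossG' : ∀ x ∈ K2, ∀ y ∈ K1, G (y - x) ≤ c₂ * ((6 : ℝ) ^ n)⁻¹ := by
      intro x hx y hy
      apply hGpair
      have := hsep y hy x hx
      simp only [Pi.sub_apply]
      omega
    have hthird : (2 : ℝ) ^ n * (c₂ * ((6 : ℝ) ^ n)⁻¹) = c₂ * (1 / 3 : ℝ) ^ n := by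
      have h63 : ((6 : ℝ)) ^ n = 2 ^ n * 3 ^ n := by rw [← mul_pow]; norm_num
      have h13 : ((1 / 3 : ℝ)) ^ n = ((3 : ℝ) ^ n)⁻¹ := by
        rw [div_pow, one_pow, one_div]
      rw [h63, h13, mul_inv]
      have h2 : ((2:ℝ)^n) ≠ 0 := by positivity
      field_simp
    refine ⟨?_, hcard, ?_⟩
    · intro x hx j
      rcases Finset.mem_union.mp hx with h | h
      · have := hdev1 x h j
        have := hw1c j
        have h8 : x j - w j = (x j - w1 j) + (w1 j - w j) := by ring
        have := Int.natAbs_add_le (x j - w1 j) (w1 j - w j)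
        have h6 : (6:ℕ) ^ (n + 1) = 6 * 6 ^ n := by rw [pow_succ]; ring
        simp only [devN]
        omega
      · have := hdev2 x h j
        have := hw2c j
        have h8 : x j - w j = (x j - w2 j) + (w2 j - w j) := by ring
        have := Int.natAbs_add_le (x j - w2 j) (w2 j - w j)
        simp only [devN]
        omega
    · intro x hx
      rw [Finset.sum_union hdisj, Finset.sum_range_succ]
      rcases Finset.mem_union.mp hx with h | h
      · have hA := hsum1 x h
        have hB : ∑ y ∈ K2, G (y - x) ≤ c₂ * (1 / 3 : ℝ) ^ n := by
          calc ∑ y ∈ K2, G (y - x) ≤ K2.card • (c₂ * ((6 : ℝ) ^ n)⁻¹) :=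
              Finset.sum_le_card_nsmul _ _ _ (fun y hy => hcrossG x h y hy)
          _ = (2 : ℝ) ^ n * (c₂ * ((6 : ℝ) ^ n)⁻¹) := by
              rw [hcard2, nsmul_eq_mul]; push_cast; ring
          _ = c₂ * (1 / 3 : ℝ) ^ n := hthird
        linarith
      · have hA := hsum2 x h
        have hB : ∑ y ∈ K1, G (y - x) ≤ c₂ * (1 / 3 : ℝ) ^ n := by
          calc ∑ y ∈ K1, G (y - x) ≤ K1.card • (c₂ * ((6 : ℝ) ^ n)⁻¹) :=
              Finset.sum_le_card_nsmul _ _ _ (fun y hy => hcrossG' x h y hy)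
          _ = (2 : ℝ) ^ n * (c₂ * ((6 : ℝ) ^ n)⁻¹) := by
              rw [hcard1, nsmul_eq_mul]; push_cast; ring
          _ = c₂ * (1 / 3 : ℝ) ^ n := hthird
        linarith

/-- Every crossing of the annulus around `w` at scale `6^n` hits every leaf of
some proper embedding. -/
lemma cross_lemma (hd : 0 < d) : ∀ n, ∀ w : Fin d → ℤ, ∀ (γ : ℕ → (Fin d → ℤ)) (ℓ : ℕ),
    (∀ i < ℓ, l1dist (γ (i + 1)) (γ i) = 1) →
    (∃ a ≤ ℓ, nsup (γ a - w) + 1 ≤ 6 ^ n) →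
    (∃ b ≤ ℓ, 2 * 6 ^ n ≤ nsup (γ b - w)) →
    ∃ K ∈ emb n w, ∀ x ∈ K, ∃ i ≤ ℓ, γ i = x := by
  intro n
  induction n with
  | zero =>
    intro w γ ℓ hsteps ha hb
    obtain ⟨a, haℓ, hav⟩ := ha
    have h0 : nsup (γ a - w) = 0 := by omega
    have hgw : γ a = w := by
      funext j
      have h1 := nsup_sub_coord_le (γ a) w j
      rw [h0] at h1
      omega
    refine ⟨{w}, by simp [emb], ?_⟩
    intro x hx
    rw [Finset.mem_singleton] at hx
    subst hx
    exact ⟨a, haℓ, hgw⟩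
  | succ n ih =>
    intro w γ ℓ hsteps ha hb
    obtain ⟨a, haℓ, hav⟩ := ha
    obtain ⟨b, hbℓ, hbv⟩ := hb
    have h6 : (6 : ℕ) ^ (n + 1) = 6 * 6 ^ n := by rw [pow_succ]; ring
    have hp1 : (0:ℕ) < 6 ^ n := Nat.pow_pos (by norm_num)
    -- find a point on the sphere of radius 6·6^n
    obtain ⟨i₂, hi₂ℓ, hi₂⟩ := path_ivt γ w ℓ hsteps a b (6 * 6 ^ n) haℓ hbℓ
      (by omega) (by omega)
    -- and one on the sphere of radius 12·6^n
    obtain ⟨i₃, hi₃ℓ, hi₃⟩ := path_ivt γ w ℓ hsteps a b (12 * 6 ^ n) haℓ hbℓ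
      (by omega) (by omega)
    obtain ⟨w1, hw1, herr1⟩ := round_lemma hd n 6 (by norm_num) w (γ i₂) hi₂
    obtain ⟨w2, hw2, herr2⟩ := round_lemma hd n 12 (by norm_num) w (γ i₃) hi₃
    have hs1 : nsup (w1 - w) = 6 * 6 ^ n := netS_sphere hw1
    have hs2 : nsup (w2 - w) = 12 * 6 ^ n := netS_sphere hw2
    -- inner condition for w1
    have hin1 : nsup (γ i₂ - w1) + 1 ≤ 6 ^ n := by
      have := nsup_sub_le_of (γ i₂) w1 (6 ^ n - 1) (fun j => by have := herr1 j; omega)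
      omega
    -- outer condition for w1 : at index b
    have hout1 : 2 * 6 ^ n ≤ nsup (γ b - w1) := by
      have htri := nsup_tri (γ b) w1 w
      rw [hs1] at htri
      omega
    -- inner condition for w2
    have hin2 : nsup (γ i₃ - w2) + 1 ≤ 6 ^ n := by
      have := nsup_sub_le_of (γ i₃) w2 (6 ^ n - 1) (fun j => by have := herr2 j; omega)
      omega
    -- outer condition for w2 : at index a
    have hout2 : 2 * 6 ^ n ≤ nsup (γ a - w2) := by
      have htri := nsup_tri w2 (γ a) w
      rw [hs2] at htri
      rw [nsup_sub_comm] at htri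
      omega
    obtain ⟨K1, hK1, hhit1⟩ := ih w1 γ ℓ hsteps ⟨i₂, hi₂ℓ, hin1⟩ ⟨b, hbℓ, hout1⟩
    obtain ⟨K2, hK2, hhit2⟩ := ih w2 γ ℓ hsteps ⟨i₃, hi₃ℓ, hin2⟩ ⟨a, haℓ, hout2⟩
    refine ⟨K1 ∪ K2, ?_, ?_⟩
    · simp only [emb, Finset.mem_biUnion, Finset.mem_image]
      exact ⟨w1, hw1, w2, hw2, K1, hK1, K2, hK2, rfl⟩
    · intro x hx
      rcases Finset.mem_union.mp hx with h | h
      · exact hhit1 x h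
      · exact hhit2 x h

lemma step_bound0 {x y : Fin d → ℤ} (h : l1dist x y = 1) : nsup x ≤ nsup y + 1 := by
  have := step_bound (w := 0) h
  simpa using this


end BIaux

open BIaux

/-- For `d ≥ 5` there exists `u₁ < ∞` such that for every `u > u₁` there is
`q ∈ (0,1)` with `P(A_n^u) ≤ q^{2^n}` for all `n ≥ 1`, where `A_n^u` is the
annulus-crossing event for the vacant set with `L_n = 6^n`; in particular the
critical parameter `u_*` of vacant set percolation is finite.  The lower bound
`BCap(K) ≥ c|K|/max_{x∈K} Σ_{y∈K} G(y-x)` and `G(z) ≍ ‖z‖^{4-d}` are assumed. -/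
theorem stmt14 (d : ℕ) (hd : 5 ≤ d) (M : BIModel d)
    (G : (Fin d → ℤ) → ℝ)
    (hG : ∃ c₁ c₂ : ℝ, 0 < c₁ ∧ 0 < c₂ ∧ ∀ z : Fin d → ℤ, z ≠ 0 →
      c₁ * _root_.enorm z ^ (4 - (d : ℝ)) ≤ G z ∧ G z ≤ c₂ * _root_.enorm z ^ (4 - (d : ℝ)))
    (hBCap : ∃ c : ℝ, 0 < c ∧ ∀ K : Finset (Fin d → ℤ), K.Nonempty →
      ∀ A : ℝ, (∀ x ∈ K, ∑ y ∈ K, G (y - x) ≤ A) →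
        c * K.card ≤ M.BCap K * A) :
    (∃ u₁ : ℝ, ∀ u : ℝ, u₁ < u → ∃ q : ℝ, q ∈ Set.Ioo (0 : ℝ) 1 ∧
      ∀ n : ℕ, 1 ≤ n → (M.P (crossEvent M u n)).toReal ≤ q ^ 2 ^ n) ∧
    {u : ℝ | 0 ≤ u ∧ M.P {ω | Percolates M u ω} = 0}.Nonempty := by
  obtain ⟨c₁, c₂, hc₁, hc₂, hG'⟩ := hG
  obtain ⟨c, hc, hB⟩ := hBCap
  have hG2 : ∀ z : Fin d → ℤ, z ≠ 0 → G z ≤ c₂ * _root_.enorm z ^ (4 - (d : ℝ)) :=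
    fun z hz => (hG' z hz).2
  set A : ℝ := max 1 (G 0 + c₂ * (3 / 2)) with hA
  have hA1 : (1 : ℝ) ≤ A := le_max_left _ _
  have hA0 : (0 : ℝ) < A := lt_of_lt_of_le one_pos hA1
  set Nb : ℕ := 25 ^ (2 * d) with hNb
  have hNb1 : 1 ≤ Nb := Nat.one_le_pow _ _ (by norm_num)
  have hNbR : (0 : ℝ) < (Nb : ℝ) := by exact_mod_cast Nat.lt_of_lt_of_le Nat.zero_lt_one hNb1
  set u₁ : ℝ := max 0 (A * (Real.log Nb + 1) / c) with hu₁
  -- Green-sum bound on any leaf set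
  have hsum_le : ∀ n (K : Finset (Fin d → ℤ)), K ∈ emb n (0 : Fin d → ℤ) →
      ∀ x ∈ K, ∑ y ∈ K, G (y - x) ≤ A := by
    intro n K hK x hx
    have h3 := (emb_inv hd G c₂ hc₂ hG2 n 0 K hK).2.2 x hx
    have hg := geo_le n
    have h4 : G 0 + c₂ * ∑ j ∈ Finset.range n, (1 / 3 : ℝ) ^ j ≤ G 0 + c₂ * (3 / 2) := by
      have := mul_le_mul_of_nonneg_left hg hc₂.le
      linarith
    exact le_trans h3 (le_trans h4 (le_max_right _ _))
  have hcard_emb : ∀ n (K : Finset (Fin d → ℤ)), K ∈ emb n (0 : Fin d → ℤ) →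
      K.card = 2 ^ n := fun n K hK => (emb_inv hd G c₂ hc₂ hG2 n 0 K hK).2.1
  have hBCapK : ∀ n (K : Finset (Fin d → ℤ)), K ∈ emb n (0 : Fin d → ℤ) →
      c * (2 : ℝ) ^ n / A ≤ M.BCap K := by
    intro n K hK
    have hKcard := hcard_emb n K hK
    have hKne : K.Nonempty := by
      rw [← Finset.card_pos, hKcard]
      positivity
    have h5 := hB K hKne A (hsum_le n K hK)
    rw [hKcard] at h5
    rw [div_le_iff₀ hA0]
    calc c * (2:ℝ) ^ n = c * ((2 ^ n : ℕ) : ℝ) := by push_cast; ring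
      _ ≤ M.BCap K * A := h5
  -- the crossing event is covered by vacancy of a leaf set
  have hsubset : ∀ (u : ℝ) (n : ℕ), crossEvent M u n ⊆
      ⋃ K ∈ emb n (0 : Fin d → ℤ), {ω | Disjoint (M.I u ω) (K : Set (Fin d → ℤ))} := by
    intro u n ω hω
    obtain ⟨ℓ, γ, hst, hvac, h0, hl⟩ := hω
    have h6p : (0:ℕ) < 6 ^ n := Nat.pow_pos (by norm_num)
    obtain ⟨K, hK, hhit⟩ := cross_lemma (by omega) n 0 γ ℓ hst
      ⟨0, Nat.zero_le _, by rw [sub_zero, h0]; omega⟩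
      ⟨ℓ, le_refl _, by rw [sub_zero, hl]⟩
    refine Set.mem_biUnion hK ?_
    rw [Set.mem_setOf_eq, Set.disjoint_left]
    intro z hz hzK
    obtain ⟨i, hiℓ, hiz⟩ := hhit z hzK
    exact hvac i hiℓ (hiz ▸ hz)
  -- the key exponential bound
  have key : ∀ u : ℝ, u₁ < u → ∀ n : ℕ,
      M.P (crossEvent M u n) ≤
        ENNReal.ofReal (((Nb : ℝ) * Real.exp (-(u * (c / A)))) ^ 2 ^ n) := by
    intro u hu n
    have hu0 : 0 ≤ u := le_of_lt (lt_of_le_of_lt (le_max_left _ _) hu)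
    set E : ℝ := Real.exp (-(u * (c * (2:ℝ) ^ n / A))) with hE
    have hE0 : 0 ≤ E := Real.exp_nonneg _
    have step1 : M.P (crossEvent M u n) ≤
        ∑ K ∈ emb n (0 : Fin d → ℤ), M.P {ω | Disjoint (M.I u ω) (K : Set (Fin d → ℤ))} :=
      le_trans (measure_mono (hsubset u n)) (measure_biUnion_finset_le _ _)
    have step2 : ∀ K ∈ emb n (0 : Fin d → ℤ),
        M.P {ω | Disjoint (M.I u ω) (K : Set (Fin d → ℤ))} ≤ ENNReal.ofReal E := by
      intro K hK
      rw [M.law u hu0 K]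
      apply ENNReal.ofReal_le_ofReal
      apply Real.exp_le_exp.mpr
      have h7 := hBCapK n K hK
      have h8 : u * (c * (2:ℝ)^n / A) ≤ u * M.BCap K := by
        apply mul_le_mul_of_nonneg_left _ hu0
        calc c * (2:ℝ)^n / A = c * (2:ℝ)^n / A := rfl
          _ ≤ M.BCap K := h7
      linarith
    have step3 : M.P (crossEvent M u n) ≤ (emb n (0 : Fin d → ℤ)).card • ENNReal.ofReal E :=
      le_trans step1 (Finset.sum_le_card_nsmul _ _ _ step2)
    have hcb : (emb n (0 : Fin d → ℤ)).card ≤ Nb ^ 2 ^ n := by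
      refine le_trans (emb_card n 0) ?_
      have h9 : (25 ^ d) ^ (2 ^ (n + 1) - 2) ≤ (25 ^ d) ^ (2 * 2 ^ n) := by
        apply Nat.pow_le_pow_right (Nat.one_le_pow _ _ (by norm_num))
        have : 2 ^ (n + 1) = 2 * 2 ^ n := by rw [pow_succ]; ring
        omega
      refine h9.trans (le_of_eq ?_)
      rw [hNb, ← pow_mul, ← pow_mul]
      ring_nf
    have step4 : M.P (crossEvent M u n) ≤ ((Nb ^ 2 ^ n : ℕ) : ℝ≥0∞) * ENNReal.ofReal E := by
      refine le_trans step3 ?_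
      rw [nsmul_eq_mul]
      exact mul_le_mul_left (by exact_mod_cast Nat.cast_le.mpr hcb) _
    refine le_trans step4 (le_of_eq ?_)
    rw [← ENNReal.ofReal_natCast (Nb ^ 2 ^ n), ← ENNReal.ofReal_mul (by positivity)]
    congr 1
    rw [mul_pow]
    congr 1
    · push_cast; ring
    · rw [← Real.exp_nat_mul, hE]
      congr 1
      push_cast
      ring
  -- properties of q for u > u₁
  have hq01 : ∀ u : ℝ, u₁ < u →
      0 < (Nb : ℝ) * Real.exp (-(u * (c / A))) ∧ (Nb : ℝ) * Real.exp (-(u * (c / A))) < 1 := by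
    intro u hu
    constructor
    · positivity
    · have h10 : A * (Real.log Nb + 1) / c < u := lt_of_le_of_lt (le_max_right _ _) hu
      have h11 : A * (Real.log Nb + 1) < u * c := (div_lt_iff₀ hc).mp h10
      have h12 : Real.log Nb < u * (c / A) := by
        rw [mul_div_assoc'] at *
        rw [lt_div_iff₀ hA0]
        nlinarith
      calc (Nb : ℝ) * Real.exp (-(u * (c / A)))
          < (Nb : ℝ) * Real.exp (-(Real.log Nb)) := by
            apply mul_lt_mul_of_pos_left _ hNbR
            exact Real.exp_lt_exp.mpr (by linarith)
        _ = 1 := by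
            rw [Real.exp_neg, Real.exp_log hNbR]
            field_simp
  constructor
  · refine ⟨u₁, fun u hu => ?_⟩
    obtain ⟨hq0, hq1⟩ := hq01 u hu
    refine ⟨(Nb : ℝ) * Real.exp (-(u * (c / A))), ⟨hq0, hq1⟩, fun n _ => ?_⟩
    exact ENNReal.toReal_le_of_le_ofReal (by positivity) (key u hu n)
  · -- percolation dies at u = u₁ + 1
    set u : ℝ := u₁ + 1 with hudef
    have huu : u₁ < u := by rw [hudef]; linarith
    have hu0 : 0 ≤ u := le_of_lt (lt_of_le_of_lt (le_max_left _ _) huu)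
    obtain ⟨hq0, hq1⟩ := hq01 u huu
    set q : ℝ := (Nb : ℝ) * Real.exp (-(u * (c / A))) with hqdef
    have hperc : {ω | Percolates M u ω} ⊆
        ⋃ (N : ℕ), ⋂ (n : ℕ), ⋂ (_ : N ≤ n), crossEvent M u n := by
      intro ω hω
      obtain ⟨f, hinj, hstepf, hvac⟩ := hω
      have hub : ∀ R : ℕ, ∃ b, R ≤ nsup (f b) := by
        intro R
        by_contra hcon
        push_neg at hcon
        have hfin : {x : Fin d → ℤ | ∀ j, x j ∈ Set.Icc (-(R : ℤ)) (R : ℤ)}.Finite := by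
          have h13 := Set.Finite.pi (fun i : Fin d => Set.finite_Icc (-(R : ℤ)) (R : ℤ))
          refine h13.subset ?_
          intro x hx
          rw [Set.mem_univ_pi]
          exact hx
        apply Set.infinite_range_of_injective hinj
        apply hfin.subset
        rintro x ⟨b, rfl⟩
        intro j
        have h14 := nsup_coord_le (f b) j
        have h15 := hcon b
        constructor
        · simp only [neg_le]
          omega
        · omega
      refine Set.mem_iUnion.mpr ⟨nsup (f 0), ?_⟩
      simp only [Set.mem_iInter]
      intro n hn
      have h6p : (0:ℕ) < 6 ^ n := Nat.pow_pos (by norm_num)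
      have h6n : nsup (f 0) + 1 ≤ 6 ^ n := by
        have h16 : n < 6 ^ n := Nat.lt_pow_self (by norm_num)
        omega
      obtain ⟨b, hb⟩ := hub (2 * 6 ^ n)
      have hstep1 : ∀ i, nsup (f (i + 1)) ≤ nsup (f i) + 1 := fun i => step_bound0 (hstepf i)
      obtain ⟨a, ha0, hab, hfa⟩ := ivt_aux (fun i => nsup (f i)) hstep1 0 b (6 ^ n - 1)
        (by show nsup (f 0) ≤ 6 ^ n - 1; omega) (by simp only [Nat.zero_add]; omega)
      obtain ⟨b', hb'1, hb'2, hfb'⟩ := ivt_aux (fun i => nsup (f i)) hstep1 a (b - a) (2 * 6 ^ n)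
        (by show nsup (f a) ≤ 2 * 6 ^ n; omega)
        (by show 2 * 6 ^ n ≤ nsup (f (a + (b - a))); rw [show a + (b - a) = b by omega]; exact hb)
      refine ⟨b' - a, fun i => f (a + i), fun i _ => hstepf (a + i), fun i _ => hvac (a + i), ?_, ?_⟩
      · simpa using hfa
      · show nsup (f (a + (b' - a))) = 2 * 6 ^ n
        rw [show a + (b' - a) = b' by omega]
        exact hfb'
    have hzero : ∀ N : ℕ, M.P (⋂ (n : ℕ), ⋂ (_ : N ≤ n), crossEvent M u n) = 0 := by
      intro N
      set x := M.P (⋂ (n : ℕ), ⋂ (_ : N ≤ n), crossEvent M u n) with hx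
      have hxle : ∀ n, N ≤ n → x ≤ ENNReal.ofReal (q ^ 2 ^ n) := by
        intro n hn
        refine le_trans (measure_mono ?_) (key u huu n)
        intro ω hω
        simp only [Set.mem_iInter] at hω
        exact hω n hn
      by_contra hne
      have hfin : x ≠ ⊤ := by
        intro htop
        have h17 := hxle N (le_refl N)
        rw [htop] at h17
        exact (ENNReal.ofReal_lt_top).not_ge h17
      have hεpos : 0 < x.toReal := ENNReal.toReal_pos hne hfin
      obtain ⟨k, hk⟩ : ∃ k, q ^ k < x.toReal := by
        have htend := tendsto_pow_atTop_nhds_zero_of_lt_one hq0.le hq1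
        exact (htend.eventually_lt_const hεpos).exists
      have h18 : q ^ 2 ^ (max N k) ≤ q ^ k := by
        apply pow_le_pow_of_le_one hq0.le hq1.le
        calc k ≤ max N k := le_max_right _ _
          _ ≤ 2 ^ max N k := Nat.le_of_lt Nat.lt_two_pow_self
      have h19 := hxle (max N k) (le_max_left _ _)
      have h20 : x.toReal ≤ q ^ 2 ^ (max N k) :=
        ENNReal.toReal_le_of_le_ofReal (by positivity) h19
      linarith
    refine ⟨u, hu0, ?_⟩
    apply le_antisymm _ zero_le
    calc M.P {ω | Percolates M u ω}
        ≤ M.P (⋃ (N : ℕ), ⋂ (n : ℕ), ⋂ (_ : N ≤ n), crossEvent M u n) := measure_mono hperc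
      _ ≤ ∑' (N : ℕ), M.P (⋂ (n : ℕ), ⋂ (_ : N ≤ n), crossEvent M u n) := measure_iUnion_le _
      _ = 0 := by simp [hzero]
end

section
/- There exists ε_0 > 0 such that for all ε ∈ (0, ε_0) there is c > 0 so that for any finite nonempty K ⊂ ℤ^d: (i) Σ_{x ≠ y ∈ K} P(x, y ∈ K_ε) ≤ |K|^{2ε} + c|K|^{−ε}; and (ii) for any η ∈ (3ε, 1), Σ_{x,y ∈ K, 0 < ||x−y|| < |K|^{(1−η)/d}} P(x, y ∈ K_ε) ≤ c |K|^{−ε}, where K_ε = {x ∈ K : U_x ≥ (1−ε) log|K| / BCap({0})}. -/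
open MeasureTheory ENNReal Classical

/-! Second moment bounds for the set of late points. -/

/-- Euclidean norm of a lattice point. -/
noncomputable def latticeEnorm {d : ℕ} (x : Fin d → ℤ) : ℝ :=
  Real.sqrt (∑ i, ((x i : ℝ)) ^ 2)

/-- `U_x = inf{u ≥ 0 : x ∈ 𝓘^u}`, the cover level of `x`. -/
noncomputable def coverLevel {d : ℕ} (M : BIModel d) (x : Fin d → ℤ) (ω : M.Ω) : ℝ :=
  sInf {u : ℝ | 0 ≤ u ∧ x ∈ M.I u ω}

lemma abs_le_enorm {d : ℕ} (x : Fin d → ℤ) (i : Fin d) : |((x i : ℝ))| ≤ latticeEnorm x := by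
  rw [← Real.sqrt_sq_eq_abs, latticeEnorm]
  exact Real.sqrt_le_sqrt (Finset.single_le_sum (fun j _ => sq_nonneg ((x j : ℝ))) (Finset.mem_univ i))

lemma count_lemma {d : ℕ} (K : Finset (Fin d → ℤ)) (ρ : ℝ) (hρ : 0 ≤ ρ)
    (A : Finset ((Fin d → ℤ) × (Fin d → ℤ))) (hA : A ⊆ K ×ˢ K)
    (h : ∀ p ∈ A, latticeEnorm (p.1 - p.2) < ρ) :
    (A.card : ℝ) ≤ K.card * (2*ρ+1)^d := by
  classical
  set m : ℕ := ⌊ρ⌋₊ with hm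
  set Box : Finset (Fin d → ℤ) := Fintype.piFinset fun _ => Finset.Icc (-(m:ℤ)) m with hBox
  have hBoxcard : Box.card = (2*m+1)^d := by
    rw [hBox, Fintype.card_piFinset]
    have h1 : ∀ i : Fin d, (Finset.Icc (-(m:ℤ)) (m:ℤ)).card = 2*m+1 := by
      intro i; rw [Int.card_Icc]; omega
    rw [Finset.prod_congr rfl (fun i _ => h1 i), Finset.prod_const, Finset.card_univ,
      Fintype.card_fin]
  have hcard : A.card ≤ (K ×ˢ Box).card := by
    apply Finset.card_le_card_of_injOn (fun p => (p.1, p.1 - p.2))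
    · intro p hp
      have hp1 := hA hp
      rw [Finset.mem_product] at hp1
      rw [Finset.mem_coe, Finset.mem_product]
      refine ⟨hp1.1, ?_⟩
      simp only [hBox, Fintype.mem_piFinset]
      intro i
      rw [Finset.mem_Icc]
      have habs : |(((p.1 - p.2) i : ℝ))| ≤ latticeEnorm (p.1 - p.2) := abs_le_enorm _ i
      have hlt : (((p.1 - p.2) i).natAbs : ℝ) ≤ ρ := by
        rw [Nat.cast_natAbs, Int.cast_abs]
        exact le_of_lt (lt_of_le_of_lt habs (h p hp))
      have h2 : ((p.1 - p.2) i).natAbs ≤ m := Nat.le_floor hlt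
      constructor <;> omega
    · intro p hp q hq hpq
      simp only [Prod.mk.injEq] at hpq
      have h1 : p.1 = q.1 := hpq.1
      have h2 : p.2 = q.2 := by
        have h3 := hpq.2
        rw [h1] at h3
        ext i
        have h4 := congrFun h3 i
        simp only [Pi.sub_apply] at h4
        omega
      exact Prod.ext h1 h2
  have hfloor : (m : ℝ) ≤ ρ := Nat.floor_le hρ
  calc (A.card : ℝ) ≤ ((K ×ˢ Box).card : ℝ) := by exact_mod_cast hcard
    _ = K.card * ((2*m+1:ℕ) : ℝ)^d := by
        rw [Finset.card_product, hBoxcard]; push_cast; ring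
    _ ≤ K.card * (2*ρ+1)^d := by
        apply mul_le_mul_of_nonneg_left _ (by positivity)
        apply pow_le_pow_left₀ (by positivity)
        push_cast; linarith

/-- Sum over a set of pairs at distance `< ρ`, with uniform term bound `b`. -/
lemma sum_bound {d : ℕ} (K : Finset (Fin d → ℤ))
    (f : (Fin d → ℤ) × (Fin d → ℤ) → ℝ)
    (S : Finset ((Fin d → ℤ) × (Fin d → ℤ))) (hS : S ⊆ K ×ˢ K)
    (ρ b : ℝ) (hρ : 1 ≤ ρ) (hb : 0 ≤ b)
    (hr : ∀ p ∈ S, latticeEnorm (p.1 - p.2) < ρ)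
    (hf : ∀ p ∈ S, f p ≤ b) :
    ∑ p ∈ S, f p ≤ (K.card : ℝ) * 3^d * ρ^d * b := by
  have h1 : ∑ p ∈ S, f p ≤ S.card • b := Finset.sum_le_card_nsmul S f b hf
  rw [nsmul_eq_mul] at h1
  have h2 : (S.card : ℝ) ≤ K.card * (2*ρ+1)^d :=
    count_lemma K ρ (by linarith) S hS hr
  have h3 : (2*ρ+1)^d ≤ 3^d * ρ^d := by
    rw [← mul_pow]
    apply pow_le_pow_left₀ (by linarith)
    linarith
  calc ∑ p ∈ S, f p ≤ (S.card : ℝ) * b := h1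
    _ ≤ (K.card : ℝ) * (2*ρ+1)^d * b := by
        apply mul_le_mul_of_nonneg_right h2 hb
    _ ≤ (K.card : ℝ) * (3^d * ρ^d) * b := by
        apply mul_le_mul_of_nonneg_right _ hb
        exact mul_le_mul_of_nonneg_left h3 (Nat.cast_nonneg _)
    _ = (K.card : ℝ) * 3^d * ρ^d * b := by ring

set_option maxHeartbeats 1000000 in
/-- Second-moment bounds for the set
`K_ε = {x ∈ K : U_x ≥ (1-ε)·log|K|/BCap({0})}` of `ε`-late points:
(i) `Σ_{x≠y} P(x,y ∈ K_ε) ≤ |K|^{2ε} + c|K|^{-ε}`, and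
(ii) for `η ∈ (3ε,1)`, the sum restricted to pairs `0 < ‖x-y‖ < |K|^{(1-η)/d}`
is at most `c|K|^{-ε}`.  The joint law of cover levels, the uniform strict
capacity increase, and the two-point capacity asymptotics are assumed. -/
theorem stmt16 (d : ℕ) (hd : 5 ≤ d) (M : BIModel d)
    (hpos : 0 < M.BCap {0})
    (hjoint : ∀ (x y : Fin d → ℤ) (u : ℝ), 0 ≤ u →
      M.P {ω | u ≤ coverLevel M x ω ∧ u ≤ coverLevel M y ω} =
        ENNReal.ofReal (Real.exp (-(u * M.BCap {x, y}))))
    (hsingle : ∀ (x : Fin d → ℤ) (u : ℝ), 0 ≤ u →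
      M.P {ω | u ≤ coverLevel M x ω} =
        ENNReal.ofReal (Real.exp (-(u * M.BCap {0}))))
    (hdelta : ∃ δ : ℝ, 0 < δ ∧ ∀ x y : Fin d → ℤ, x ≠ y →
      (1 + δ) * M.BCap {0} ≤ M.BCap {x, y})
    (hupper : ∃ C : ℝ, 0 < C ∧ ∀ x y : Fin d → ℤ, x ≠ y →
      2 * M.BCap {0} - M.BCap {x, y} ≤ C / latticeEnorm (x - y) ^ ((d : ℝ) - 4)) :
    ∃ ε₀ : ℝ, 0 < ε₀ ∧ ∀ ε : ℝ, 0 < ε → ε < ε₀ → ∃ c : ℝ, 0 < c ∧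
      ∀ K : Finset (Fin d → ℤ), K.Nonempty →
        (∑ p ∈ (K ×ˢ K).filter (fun p => p.1 ≠ p.2),
            (M.P {ω |
              (1 - ε) * Real.log K.card / M.BCap {0} ≤ coverLevel M p.1 ω ∧
              (1 - ε) * Real.log K.card / M.BCap {0} ≤ coverLevel M p.2 ω}).toReal)
          ≤ (K.card : ℝ) ^ (2 * ε) + c * (K.card : ℝ) ^ (-ε) ∧
        ∀ η : ℝ, 3 * ε < η → η < 1 →
          (∑ p ∈ (K ×ˢ K).filter (fun p => p.1 ≠ p.2 ∧
              latticeEnorm (p.1 - p.2) < (K.card : ℝ) ^ ((1 - η) / d)),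
            (M.P {ω |
              (1 - ε) * Real.log K.card / M.BCap {0} ≤ coverLevel M p.1 ω ∧
              (1 - ε) * Real.log K.card / M.BCap {0} ≤ coverLevel M p.2 ω}).toReal)
          ≤ c * (K.card : ℝ) ^ (-ε) := by
  classical
  obtain ⟨δ, hδ, hcap⟩ := hdelta
  obtain ⟨C, hC, hcap2⟩ := hupper
  have hd5 : (5:ℝ) ≤ (d:ℝ) := by exact_mod_cast hd
  have hd4 : (1:ℝ) ≤ (d:ℝ) - 4 := by linarith
  have hd4' : ((d:ℝ) - 4) ≠ 0 := by linarith
  have hdR : (0:ℝ) < (d:ℝ) := by linarith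
  set B := M.BCap {0} with hB
  clear_value B
  refine ⟨δ / (30 + δ), by positivity, ?_⟩
  intro ε hε hεlt
  have hεsmall : ε * (30 + δ) < δ := by
    rw [lt_div_iff₀ (by linarith : (0:ℝ) < 30 + δ)] at hεlt; linarith
  have hε1 : ε < 1 := by nlinarith
  set T := C / (B * ε) with hT
  clear_value T
  have hT0 : 0 < T := by rw [hT]; positivity
  set c : ℝ := 3^d * (2 + T * Real.exp T) + 3^d + T * Real.exp T with hc
  clear_value c
  have hcpos : 0 < c := by rw [hc]; positivity
  refine ⟨c, hcpos, ?_⟩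
  intro K hK
  set n := K.card with hn
  have hn1 : 1 ≤ n := by rw [hn]; exact Finset.card_pos.mpr hK
  set N : ℝ := (n : ℝ) with hN
  clear_value N
  have hN1 : (1:ℝ) ≤ N := by rw [hN]; exact_mod_cast hn1
  have hN0 : (0:ℝ) < N := lt_of_lt_of_le one_pos hN1
  have hlogN : 0 ≤ Real.log N := Real.log_nonneg hN1
  set u := (1 - ε) * Real.log N / B with hu
  clear_value u
  have hu0 : 0 ≤ u := by
    rw [hu]
    apply div_nonneg _ hpos.le
    exact mul_nonneg (by linarith) hlogN
  have hNcard : (K.card : ℝ) = N := by rw [hN, hn]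
  -- basic rpow facts
  have hNpow : ∀ a b : ℝ, N ^ a * N ^ b = N ^ (a + b) := fun a b =>
    (Real.rpow_add hN0 a b).symm
  have hmono : ∀ a b : ℝ, a ≤ b → N ^ a ≤ N ^ b := fun a b h =>
    Real.rpow_le_rpow_of_exponent_le hN1 h
  have hNnn : ∀ a : ℝ, (0:ℝ) ≤ N ^ a := fun a => Real.rpow_nonneg hN0.le a
  -- the term value
  have hterm : ∀ x y : Fin d → ℤ,
      (M.P {ω | u ≤ coverLevel M x ω ∧ u ≤ coverLevel M y ω}).toReal
        = Real.exp (-(u * M.BCap {x, y})) := fun x y => by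
    rw [hjoint x y u hu0, ENNReal.toReal_ofReal (Real.exp_nonneg _)]
  -- near bound
  have hboundA : ∀ x y : Fin d → ℤ, x ≠ y →
      Real.exp (-(u * M.BCap {x, y})) ≤ N ^ (-((1-ε)*(1+δ))) := by
    intro x y hxy
    rw [Real.rpow_def_of_pos hN0]
    apply Real.exp_le_exp.mpr
    have h1 := hcap x y hxy
    have e1 : u * ((1+δ)*B) ≤ u * M.BCap {x,y} := mul_le_mul_of_nonneg_left h1 hu0
    have e2 : u * ((1+δ)*B) = (1-ε)*(1+δ)*Real.log N := by
      rw [hu]; field_simp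
    nlinarith [e1, e2]
  -- distance scales
  set ρ : ℝ := N ^ (5*ε/((d:ℝ)-4)) with hρ
  clear_value ρ
  have hρ1 : 1 ≤ ρ := by
    rw [hρ]
    exact Real.one_le_rpow hN1 (div_nonneg (by linarith) (by linarith))
  have hρd4 : ρ ^ ((d:ℝ)-4) = N ^ (5*ε) := by
    rw [hρ, ← Real.rpow_mul hN0.le, div_mul_cancel₀ _ hd4']
  -- far pointwise bound
  set t : ℝ := u * C * N ^ (-(5*ε)) with ht
  clear_value t
  have ht0 : 0 ≤ t := by
    rw [ht]
    exact mul_nonneg (mul_nonneg hu0 hC.le) (hNnn _)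
  have hboundB : ∀ x y : Fin d → ℤ, x ≠ y → ρ ≤ latticeEnorm (x - y) →
      Real.exp (-(u * M.BCap {x, y})) ≤ N ^ (-(2*(1-ε))) * Real.exp t := by
    intro x y hxy hr
    have hr0 : (0:ℝ) < latticeEnorm (x - y) := by linarith
    have hrp : N ^ (5*ε) ≤ latticeEnorm (x - y) ^ ((d:ℝ)-4) := by
      rw [← hρd4]
      exact Real.rpow_le_rpow (by linarith) hr (by linarith)
    have hrp0 : (0:ℝ) < N ^ (5*ε) := by positivity
    have hdiv : C / latticeEnorm (x - y) ^ ((d:ℝ)-4) ≤ C * N ^ (-(5*ε)) := by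
      rw [Real.rpow_neg hN0.le, ← div_eq_mul_inv]
      exact div_le_div_of_nonneg_left hC.le hrp0 hrp
    have h1 := hcap2 x y hxy
    have h2 : 2*B - C * N ^ (-(5*ε)) ≤ M.BCap {x,y} := by linarith
    have e1 : u * (2*B - C * N ^ (-(5*ε))) ≤ u * M.BCap {x,y} :=
      mul_le_mul_of_nonneg_left h2 hu0
    have e2 : u * (2*B) = 2*(1-ε)*Real.log N := by
      rw [hu]; field_simp
    have e3 : -(u * M.BCap {x,y}) ≤ -(2*(1-ε))*Real.log N + t := by
      rw [ht]; nlinarith [e1, e2]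
    calc Real.exp (-(u * M.BCap {x,y})) ≤ Real.exp (-(2*(1-ε))*Real.log N + t) :=
          Real.exp_le_exp.mpr e3
      _ = N ^ (-(2*(1-ε))) * Real.exp t := by
          rw [Real.exp_add, Real.rpow_def_of_pos hN0, mul_comm (Real.log N)]
  -- bounds on t
  have hlogle : Real.log N ≤ N ^ ε / ε := by
    have h1 : Real.log (N ^ ε) = ε * Real.log N := Real.log_rpow hN0 ε
    have h2 : Real.log (N ^ ε) ≤ N ^ ε - 1 := Real.log_le_sub_one_of_pos (by positivity)
    rw [le_div_iff₀ hε]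
    nlinarith [h1, h2]
  have hule : u ≤ N ^ ε / (ε * B) := by
    rw [hu, div_le_div_iff₀ hpos (by positivity)]
    have key : Real.log N * ε ≤ N ^ ε := (le_div_iff₀ hε).mp hlogle
    nlinarith [mul_le_mul_of_nonneg_right key hpos.le,
      mul_nonneg (mul_nonneg (mul_nonneg hε.le hε.le) hlogN) hpos.le]
  have htT4 : t ≤ T * N ^ (-(4*ε)) := by
    have h4 : N ^ ε * N ^ (-(5*ε)) = N ^ (-(4*ε)) := by
      rw [hNpow]; congr 1; ring
    calc t = u * C * N ^ (-(5*ε)) := ht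
      _ ≤ (N ^ ε / (ε * B)) * C * N ^ (-(5*ε)) := by
          apply mul_le_mul_of_nonneg_right (mul_le_mul_of_nonneg_right hule hC.le) (hNnn _)
      _ = T * (N ^ ε * N ^ (-(5*ε))) := by rw [hT]; field_simp
      _ = T * N ^ (-(4*ε)) := by rw [h4]
  have htT : t ≤ T := by
    have h5 : N ^ (-(4*ε)) ≤ 1 := Real.rpow_le_one_of_one_le_of_nonpos hN1 (by linarith)
    nlinarith [htT4]
  have hexp_t : Real.exp t ≤ 1 + t * Real.exp T := by
    have h1 : 1 - t ≤ Real.exp (-t) := by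
      have := Real.add_one_le_exp (-t); linarith
    have h2 : (1 - t) * Real.exp t ≤ 1 := by
      have h3 := mul_le_mul_of_nonneg_right h1 (Real.exp_nonneg t)
      rwa [← Real.exp_add, neg_add_cancel, Real.exp_zero] at h3
    have h4 : Real.exp t ≤ Real.exp T := Real.exp_le_exp.mpr htT
    nlinarith [Real.exp_pos t]
  have hexpT1 : (0:ℝ) ≤ 1 + T * Real.exp T := by positivity
  have hbT : (0:ℝ) ≤ 1 + T * Real.exp T := hexpT1
  have hbT2 : (0:ℝ) ≤ 2 + T * Real.exp T := by nlinarith only [hT0, Real.exp_pos T]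
  have hexpTT : Real.exp t ≤ 1 + T * Real.exp T := by
    calc Real.exp t ≤ 1 + t * Real.exp T := hexp_t
      _ ≤ 1 + T * Real.exp T := by nlinarith [Real.exp_pos T, htT]
  -- ρ^d bound
  have hρdpow : (ρ:ℝ) ^ d ≤ N ^ (25*ε) := by
    have h1 : (ρ:ℝ) ^ d = N ^ (5*ε/((d:ℝ)-4) * d) := by
      rw [hρ, ← Real.rpow_natCast (N ^ (5*ε/((d:ℝ)-4))) d, ← Real.rpow_mul hN0.le]
    rw [h1]
    apply hmono
    rw [div_mul_eq_mul_div, div_le_iff₀ (by linarith)]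
    nlinarith
  -- the probability function
  set f : (Fin d → ℤ) × (Fin d → ℤ) → ℝ := fun p =>
    (M.P {ω | u ≤ coverLevel M p.1 ω ∧ u ≤ coverLevel M p.2 ω}).toReal with hf
  have hfval : ∀ p, f p = Real.exp (-(u * M.BCap {p.1, p.2})) := fun p => hterm p.1 p.2
  have hfnn : ∀ p, 0 ≤ f p := fun p => ENNReal.toReal_nonneg
  clear_value f
  -- near-sum bound, generic
  have hnear : ∀ S : Finset ((Fin d → ℤ) × (Fin d → ℤ)), S ⊆ K ×ˢ K →
      (∀ p ∈ S, p.1 ≠ p.2) → (∀ p ∈ S, latticeEnorm (p.1 - p.2) < ρ) →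
      ∑ p ∈ S, f p ≤ 3^d * N ^ (-ε) := by
    intro S hS hSne hSr
    have h1 : ∑ p ∈ S, f p ≤ N * 3^d * ρ^d * N ^ (-((1-ε)*(1+δ))) := by
      have hsb := sum_bound K f S hS ρ (N ^ (-((1-ε)*(1+δ)))) hρ1 (hNnn _) hSr ?_
      · rwa [hNcard] at hsb
      · intro p hp
        rw [hfval]
        exact hboundA p.1 p.2 (hSne p hp)
    have h2 : N * 3^d * ρ^d * N ^ (-((1-ε)*(1+δ)))
        ≤ 3^d * (N ^ (1:ℝ) * N ^ (25*ε) * N ^ (-((1-ε)*(1+δ)))) := by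
      rw [Real.rpow_one]
      have := mul_le_mul_of_nonneg_left hρdpow
        (mul_nonneg hN0.le (by positivity) : (0:ℝ) ≤ N * 3^d)
      calc N * 3^d * ρ^d * N ^ (-((1-ε)*(1+δ)))
          ≤ N * 3^d * N ^ (25*ε) * N ^ (-((1-ε)*(1+δ))) := by
            apply mul_le_mul_of_nonneg_right _ (hNnn _)
            exact this
        _ = 3^d * (N * N ^ (25*ε) * N ^ (-((1-ε)*(1+δ)))) := by ring
    have h3 : N ^ (1:ℝ) * N ^ (25*ε) * N ^ (-((1-ε)*(1+δ))) ≤ N ^ (-ε) := by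
      rw [hNpow, hNpow]
      apply hmono
      nlinarith
    calc ∑ p ∈ S, f p ≤ 3^d * (N ^ (1:ℝ) * N ^ (25*ε) * N ^ (-((1-ε)*(1+δ)))) :=
          le_trans h1 h2
      _ ≤ 3^d * N ^ (-ε) := mul_le_mul_of_nonneg_left h3 (by positivity)
  constructor
  · -- part (i)
    set A := (K ×ˢ K).filter (fun p => p.1 ≠ p.2) with hA
    have hsplit := Finset.sum_filter_add_sum_filter_not A
      (fun p => latticeEnorm (p.1 - p.2) < ρ) f
    rw [← hsplit]
    have hnear1 : ∑ p ∈ A.filter (fun p => latticeEnorm (p.1 - p.2) < ρ), f p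
        ≤ 3^d * N ^ (-ε) := by
      apply hnear _ ((Finset.filter_subset _ _).trans (Finset.filter_subset _ _))
      · intro p hp
        have := Finset.mem_filter.mp ((Finset.filter_subset _ _) hp)
        exact this.2
      · intro p hp
        exact (Finset.mem_filter.mp hp).2
    have hfar1 : ∑ p ∈ A.filter (fun p => ¬ latticeEnorm (p.1 - p.2) < ρ), f p
        ≤ N ^ (2*ε) + T * Real.exp T * N ^ (-ε) := by
      have hb : ∀ p ∈ A.filter (fun p => ¬ latticeEnorm (p.1 - p.2) < ρ),
          f p ≤ N ^ (-(2*(1-ε))) * (1 + t * Real.exp T) := by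
        intro p hp
        have hp1 := Finset.mem_filter.mp hp
        have hp2 := Finset.mem_filter.mp hp1.1
        rw [hfval]
        calc Real.exp (-(u * M.BCap {p.1, p.2}))
            ≤ N ^ (-(2*(1-ε))) * Real.exp t :=
              hboundB p.1 p.2 hp2.2 (not_lt.mp hp1.2)
          _ ≤ N ^ (-(2*(1-ε))) * (1 + t * Real.exp T) :=
              mul_le_mul_of_nonneg_left hexp_t (hNnn _)
      have hcount : ((A.filter (fun p => ¬ latticeEnorm (p.1 - p.2) < ρ)).card : ℝ) ≤ N^2 := by
        have h1 : (A.filter (fun p => ¬ latticeEnorm (p.1 - p.2) < ρ)).card ≤ (K ×ˢ K).card :=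
          Finset.card_le_card ((Finset.filter_subset _ _).trans (Finset.filter_subset _ _))
        rw [Finset.card_product] at h1
        calc ((A.filter (fun p => ¬ latticeEnorm (p.1 - p.2) < ρ)).card : ℝ)
            ≤ (K.card : ℝ) * (K.card : ℝ) := by exact_mod_cast h1
          _ = N * N := by rw [hNcard]
          _ = N^2 := by ring
      have h1 : ∑ p ∈ A.filter (fun p => ¬ latticeEnorm (p.1 - p.2) < ρ), f p
          ≤ N^2 * (N ^ (-(2*(1-ε))) * (1 + t * Real.exp T)) := by
        have h2 := Finset.sum_le_card_nsmul _ f _ hb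
        rw [nsmul_eq_mul] at h2
        calc ∑ p ∈ A.filter (fun p => ¬ latticeEnorm (p.1 - p.2) < ρ), f p
            ≤ ((A.filter (fun p => ¬ latticeEnorm (p.1 - p.2) < ρ)).card : ℝ)
              * (N ^ (-(2*(1-ε))) * (1 + t * Real.exp T)) := h2
          _ ≤ N^2 * (N ^ (-(2*(1-ε))) * (1 + t * Real.exp T)) := by
              apply mul_le_mul_of_nonneg_right hcount
              exact mul_nonneg (hNnn _)
                (by nlinarith [ht0, Real.exp_pos T])
      have h3 : N^2 * (N ^ (-(2*(1-ε))) * (1 + t * Real.exp T))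
          = N ^ (2*ε) + N ^ (2*ε) * t * Real.exp T := by
        have h4 : (N:ℝ)^2 * N ^ (-(2*(1-ε))) = N ^ (2*ε) := by
          rw [← Real.rpow_natCast N 2, hNpow]
          congr 1
          push_cast
          ring
        rw [← h4]
        ring
      have h5 : N ^ (2*ε) * t * Real.exp T ≤ T * Real.exp T * N ^ (-ε) := by
        have h6 : N ^ (2*ε) * t ≤ T * N ^ (-ε) := by
          calc N ^ (2*ε) * t ≤ N ^ (2*ε) * (T * N ^ (-(4*ε))) :=
                mul_le_mul_of_nonneg_left htT4 (hNnn _)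
            _ = T * (N ^ (2*ε) * N ^ (-(4*ε))) := by ring
            _ = T * N ^ (-(2*ε)) := by rw [hNpow]; congr 2; ring
            _ ≤ T * N ^ (-ε) := by
                apply mul_le_mul_of_nonneg_left (hmono _ _ (by linarith)) hT0.le
        calc N ^ (2*ε) * t * Real.exp T ≤ T * N ^ (-ε) * Real.exp T :=
              mul_le_mul_of_nonneg_right h6 (Real.exp_nonneg _)
          _ = T * Real.exp T * N ^ (-ε) := by ring
      calc ∑ p ∈ A.filter (fun p => ¬ latticeEnorm (p.1 - p.2) < ρ), f p
          ≤ N^2 * (N ^ (-(2*(1-ε))) * (1 + t * Real.exp T)) := h1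
        _ = N ^ (2*ε) + N ^ (2*ε) * t * Real.exp T := h3
        _ ≤ N ^ (2*ε) + T * Real.exp T * N ^ (-ε) := by linarith only [h5]
    have h00 : (0:ℝ) ≤ 3^d*(2+T*Real.exp T) * N^(-ε) :=
      mul_nonneg (mul_nonneg (pow_nonneg (by norm_num) d) hbT2) (hNnn (-ε))
    have hcc : 3^d * N ^ (-ε) + (N ^ (2*ε) + T * Real.exp T * N ^ (-ε))
        ≤ N ^ (2*ε) + c * N ^ (-ε) := by
      rw [hc]
      nlinarith only [h00]
    linarith only [hnear1, hfar1, hcc]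
  · -- part (ii)
    intro η hη3 hη1
    set R : ℝ := N ^ ((1 - η) / (d:ℝ)) with hR
    clear_value R
    have hR1 : 1 ≤ R := by
      rw [hR]
      exact Real.one_le_rpow hN1 (div_nonneg (by linarith) (by linarith))
    set A' := (K ×ˢ K).filter (fun p => p.1 ≠ p.2 ∧ latticeEnorm (p.1 - p.2) < R) with hA'
    have hsplit := Finset.sum_filter_add_sum_filter_not A'
      (fun p => latticeEnorm (p.1 - p.2) < ρ) f
    rw [← hsplit]
    have hnear2 : ∑ p ∈ A'.filter (fun p => latticeEnorm (p.1 - p.2) < ρ), f p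
        ≤ 3^d * N ^ (-ε) := by
      apply hnear _ ((Finset.filter_subset _ _).trans (Finset.filter_subset _ _))
      · intro p hp
        have h1 := Finset.mem_filter.mp ((Finset.filter_subset _ _) hp)
        exact h1.2.1
      · intro p hp
        exact (Finset.mem_filter.mp hp).2
    have hmid : ∑ p ∈ A'.filter (fun p => ¬ latticeEnorm (p.1 - p.2) < ρ), f p
        ≤ 3^d * (1 + T * Real.exp T) * N ^ (-ε) := by
      have h1 : ∀ S : Finset ((Fin d → ℤ) × (Fin d → ℤ)), S ⊆ K ×ˢ K →
          (∀ p ∈ S, p.1 ≠ p.2) → (∀ p ∈ S, ¬ latticeEnorm (p.1 - p.2) < ρ) →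
          (∀ p ∈ S, latticeEnorm (p.1 - p.2) < R) →
          ∑ p ∈ S, f p ≤ N * 3^d * R^d * (N ^ (-(2*(1-ε))) * (1 + T * Real.exp T)) := by
        intro S hS hSne hSfar hSR
        have hsb := sum_bound K f S hS
          R (N ^ (-(2*(1-ε))) * (1 + T * Real.exp T)) hR1
          (mul_nonneg (hNnn _) hbT) hSR ?_
        · rwa [hNcard] at hsb
        · intro p hp
          rw [hfval]
          calc Real.exp (-(u * M.BCap {p.1, p.2}))
              ≤ N ^ (-(2*(1-ε))) * Real.exp t :=
                hboundB p.1 p.2 (hSne p hp) (not_lt.mp (hSfar p hp))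
            _ ≤ N ^ (-(2*(1-ε))) * (1 + T * Real.exp T) :=
                mul_le_mul_of_nonneg_left hexpTT (hNnn _)
      have h1' : ∑ p ∈ A'.filter (fun p => ¬ latticeEnorm (p.1 - p.2) < ρ), f p
          ≤ N * 3^d * R^d * (N ^ (-(2*(1-ε))) * (1 + T * Real.exp T)) := by
        apply h1 _ ((Finset.filter_subset _ _).trans (Finset.filter_subset _ _))
        · intro p hp
          have h2 := Finset.mem_filter.mp ((Finset.filter_subset _ _) hp)
          exact h2.2.1
        · intro p hp
          exact (Finset.mem_filter.mp hp).2
        · intro p hp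
          have h2 := Finset.mem_filter.mp ((Finset.filter_subset _ _) hp)
          exact h2.2.2
      have hRd : (R:ℝ)^d = N ^ (1 - η) := by
        rw [hR, ← Real.rpow_natCast (N ^ ((1-η)/(d:ℝ))) d, ← Real.rpow_mul hN0.le,
          div_mul_cancel₀ _ (ne_of_gt hdR)]
      have h3 : N * 3^d * R^d * (N ^ (-(2*(1-ε))) * (1 + T * Real.exp T))
          = 3^d * (1 + T * Real.exp T) * (N ^ (1:ℝ) * N ^ (1-η) * N ^ (-(2*(1-ε)))) := by
        rw [hRd, Real.rpow_one]; ring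
      have h4 : N ^ (1:ℝ) * N ^ (1-η) * N ^ (-(2*(1-ε))) ≤ N ^ (-ε) := by
        rw [hNpow, hNpow]
        apply hmono
        linarith
      calc ∑ p ∈ A'.filter (fun p => ¬ latticeEnorm (p.1 - p.2) < ρ), f p
          ≤ N * 3^d * R^d * (N ^ (-(2*(1-ε))) * (1 + T * Real.exp T)) := h1'
        _ = 3^d * (1 + T * Real.exp T) * (N ^ (1:ℝ) * N ^ (1-η) * N ^ (-(2*(1-ε)))) := h3
        _ ≤ 3^d * (1 + T * Real.exp T) * N ^ (-ε) :=
            mul_le_mul_of_nonneg_left h4 (by positivity)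
    have h01 : (0:ℝ) ≤ (3^d + T*Real.exp T) * N^(-ε) :=
      mul_nonneg (add_nonneg (pow_nonneg (by norm_num) d)
        (mul_nonneg hT0.le (Real.exp_nonneg T))) (hNnn (-ε))
    have hcc : (3:ℝ)^d * N ^ (-ε) + 3^d * (1 + T * Real.exp T) * N ^ (-ε) ≤ c * N ^ (-ε) := by
      rw [hc]
      nlinarith only [h01]
    linarith only [hnear2, hmid, hcc]
end
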